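/- arXiv:1908.10702 — 10 statements merged into one kernel-verified Lean document; each statement's English description precedes it below -/
import Mathlib

section
/- For every field K and all integers n ≥ 2 and d ≥ 2, there exists a monomial ideal I ⊆ K[x₁,…,xₙ] which is 𝔪-primary (where 𝔪 = ⟨x₁,…,xₙ⟩), such that |G(I)| > |G(I^i)| for every integer i with 2 ≤ i ≤ d. -/
open MvPolynomial

/-- A polynomial is a monomial if it is of the form `monomial s 1`. -/
def IsMonomial {K : Type*} [Field K] {σ : Type*} (p : MvPolynomial σ K) : Prop :=
  ∃ s : σ →₀ ℕ, p = monomial s 1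

/-- The minimal monomial generating set of a monomial ideal: the monomials in `I`
that are not proper multiples of monomials lying in `I`. -/
def minGen {K : Type*} [Field K] {σ : Type*} (I : Ideal (MvPolynomial σ K)) :
    Set (MvPolynomial σ K) :=
  {p | IsMonomial p ∧ p ∈ I ∧
    ∀ q : MvPolynomial σ K, IsMonomial q → q ∈ I → q ∣ p → q = p}

section Generic
variable {K : Type*} [Field K] {σ : Type*}

/-- monomial membership in a monomial ideal -/
theorem mon_mem_span {u : σ →₀ ℕ} {S : Set (σ →₀ ℕ)} :
    (monomial u (1:K)) ∈ Ideal.span ((fun s => monomial s (1:K)) '' S) ↔ ∃ s ∈ S, s ≤ u := by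
  rw [mem_ideal_span_monomial_image]
  classical
  constructor
  · intro h
    refine h u ?_
    simp [mem_support_iff, coeff_monomial]
  · rintro ⟨s, hs, hsu⟩ xi hxi
    rw [mem_support_iff, coeff_monomial] at hxi
    by_cases hux : u = xi
    · exact ⟨s, hs, hux ▸ hsu⟩
    · simp [hux] at hxi

theorem mon_dvd_mon {u v : σ →₀ ℕ} :
    (monomial u (1:K)) ∣ monomial v 1 ↔ u ≤ v := by
  rw [monomial_dvd_monomial]
  simp

theorem mon_inj : Function.Injective (fun s : σ →₀ ℕ => monomial s (1:K)) :=
  fun _ _ h => by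
    simpa using (monomial_left_injective (one_ne_zero (α := K))) h

/-- upper bound: minimal generators are among any monomial generating set -/
theorem minGen_subset (S : Set (σ →₀ ℕ)) :
    minGen (Ideal.span ((fun s => monomial s (1:K)) '' S)) ⊆
      (fun s => monomial s (1:K)) '' S := by
  rintro p ⟨⟨u, rfl⟩, hpI, hmin⟩
  obtain ⟨s, hs, hsu⟩ := mon_mem_span.mp hpI
  have hq : (monomial s (1:K)) ∈ Ideal.span ((fun s => monomial s (1:K)) '' S) :=
    Ideal.subset_span ⟨s, hs, rfl⟩
  have := hmin _ ⟨s, rfl⟩ hq (mon_dvd_mon.mpr hsu)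
  exact ⟨s, hs, this⟩

/-- lower bound: an exponent minimal in `S` gives a minimal generator -/
theorem mon_mem_minGen {S : Set (σ →₀ ℕ)} {b : σ →₀ ℕ} (hb : b ∈ S)
    (hmin : ∀ a ∈ S, a ≤ b → a = b) :
    (monomial b (1:K)) ∈ minGen (Ideal.span ((fun s => monomial s (1:K)) '' S)) := by
  refine ⟨⟨b, rfl⟩, Ideal.subset_span ⟨b, hb, rfl⟩, ?_⟩
  rintro q ⟨v, rfl⟩ hqI hdvd
  have hvb : v ≤ b := mon_dvd_mon.mp hdvd
  obtain ⟨a, ha, hav⟩ := mon_mem_span.mp hqI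
  have hab := hmin a ha (le_trans hav hvb)
  subst hab
  have : v = a := le_antisymm hvb hav
  rw [this]

open Pointwise in
theorem span_mon_mul (V W : Set (σ →₀ ℕ)) :
    Ideal.span ((fun s => monomial s (1:K)) '' V) * Ideal.span ((fun s => monomial s (1:K)) '' W)
      = Ideal.span ((fun s => monomial s (1:K)) '' (V + W)) := by
  rw [Ideal.span_mul_span']
  congr 1
  ext p
  constructor
  · rintro ⟨a, ⟨v, hv, rfl⟩, b, ⟨w, hw, rfl⟩, rfl⟩
    exact ⟨v + w, ⟨v, hv, w, hw, rfl⟩, by simp [monomial_mul]⟩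
  · rintro ⟨_, ⟨v, hv, w, hw, rfl⟩, rfl⟩
    exact ⟨monomial v 1, ⟨v, hv, rfl⟩, monomial w 1, ⟨w, hw, rfl⟩, by simp [monomial_mul]⟩

end Generic


namespace THP
noncomputable section

variable {n : ℕ}

def vec (f : Fin n → ℕ) : Fin n →₀ ℕ := Finsupp.equivFunOnFinite.symm f

@[simp] lemma vec_apply (f : Fin n → ℕ) (m : Fin n) : vec f m = f m := rfl

def Kv (t : ℕ) (j : Fin n) : Fin n →₀ ℕ := vec fun m => if m = j then 38*t else 0
def Sv (t : ℕ) (j : Fin n) : Fin n →₀ ℕ := vec fun m => if m = j then 28*t else 7*t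
def Bv (i0 i1 : Fin n) (t k : ℕ) : Fin n →₀ ℕ :=
  vec fun m => if m = i0 then 21*t+k else if m = i1 then 27*t - k else 24*t

section coords
variable (i0 i1 : Fin n) (t k : ℕ)

lemma Kv_apply (j m : Fin n) : Kv t j m = if m = j then 38*t else 0 := rfl
lemma Sv_apply (j m : Fin n) : Sv t j m = if m = j then 28*t else 7*t := rfl
lemma Bv_apply (m : Fin n) :
    Bv i0 i1 t k m = if m = i0 then 21*t+k else if m = i1 then 27*t - k else 24*t := rfl

lemma Bv_lb (hk : k ≤ 6*t) (m : Fin n) : 21*t ≤ Bv i0 i1 t k m := by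
  rw [Bv_apply]; split_ifs <;> omega

lemma Bv_ub (hk : k ≤ 6*t) (m : Fin n) : Bv i0 i1 t k m ≤ 27*t := by
  rw [Bv_apply]; split_ifs <;> omega

end coords

def Fset (t : ℕ) : Set (Fin n →₀ ℕ) := Set.range (Kv t) ∪ Set.range (Sv (n := n) t)
def Bset (i0 i1 : Fin n) (t : ℕ) : Set (Fin n →₀ ℕ) := (fun k => Bv i0 i1 t k) '' Set.Iic (6*t)
def Aset (i0 i1 : Fin n) (t : ℕ) : Set (Fin n →₀ ℕ) := Fset t ∪ Bset i0 i1 t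

section facts
variable {i0 i1 : Fin n} {t : ℕ}

open Pointwise

/-- blob elements are minimal in `Aset` -/
lemma blob_minimal (h01 : i0 ≠ i1) (ht : 1 ≤ t) {k : ℕ} (hk : k ≤ 6*t) :
    ∀ a ∈ Aset i0 i1 t, a ≤ Bv i0 i1 t k → a = Bv i0 i1 t k := by
  rintro a ((⟨j, rfl⟩ | ⟨j, rfl⟩) | ⟨k', hk', rfl⟩) hle
  · exfalso
    have h := (Finsupp.le_def.mp hle) j
    have hub := Bv_ub i0 i1 t k hk j
    rw [Kv_apply, if_pos rfl] at h
    omega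
  · exfalso
    have h := (Finsupp.le_def.mp hle) j
    have hub := Bv_ub i0 i1 t k hk j
    rw [Sv_apply, if_pos rfl] at h
    omega
  · simp only [Set.mem_Iic] at hk'
    have h0 := (Finsupp.le_def.mp hle) i0
    have h1 := (Finsupp.le_def.mp hle) i1
    have e0 : ∀ k'', Bv i0 i1 t k'' i0 = 21*t+k'' := fun k'' => by
      rw [Bv_apply, if_pos rfl]
    have e1 : ∀ k'', Bv i0 i1 t k'' i1 = 27*t - k'' := fun k'' => by
      rw [Bv_apply, if_neg h01.symm, if_pos rfl]
    rw [e0, e0] at h0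
    rw [e1, e1] at h1
    have : k' = k := by omega
    rw [this]

/-- blob + K-corner dominates `Sv j + Sv j` -/
lemma dom_blob_K {k : ℕ} (hk : k ≤ 6*t) (j : Fin n) :
    Sv t j + Sv t j ≤ Bv i0 i1 t k + Kv t j := by
  rw [Finsupp.le_def]
  intro m
  rw [Finsupp.add_apply, Finsupp.add_apply, Sv_apply, Kv_apply]
  have hb := Bv_lb i0 i1 t k hk m
  split_ifs <;> omega

/-- blob + side dominates `Kv j + Sv m0` for any `m0 ≠ j` -/
lemma dom_blob_S {k : ℕ} (hk : k ≤ 6*t) (j m0 : Fin n) (hm : m0 ≠ j) :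
    Kv t j + Sv t m0 ≤ Bv i0 i1 t k + Sv t j := by
  rw [Finsupp.le_def]
  intro m
  rw [Finsupp.add_apply, Finsupp.add_apply, Kv_apply, Sv_apply, Sv_apply]
  have hb := Bv_lb i0 i1 t k hk m
  split_ifs <;> omega

/-- blob + blob dominates `Sv i0 + Sv i1` -/
lemma dom_blob_blob (h01 : i0 ≠ i1) {k k' : ℕ} (hk : k ≤ 6*t) (hk' : k' ≤ 6*t) :
    Sv t i0 + Sv t i1 ≤ Bv i0 i1 t k + Bv i0 i1 t k' := by
  rw [Finsupp.le_def]
  intro m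
  rw [Finsupp.add_apply, Finsupp.add_apply, Sv_apply, Sv_apply]
  have hb := Bv_lb i0 i1 t k hk m
  have hb' := Bv_lb i0 i1 t k' hk' m
  split_ifs <;> omega

end facts

section ideals
variable {Kf : Type*} [Field Kf] {i0 i1 : Fin n} {t : ℕ}

open Pointwise

lemma CJ_le (h01 : i0 ≠ i1) :
    Ideal.span ((fun s => monomial s (1:Kf)) '' Bset i0 i1 t) *
      Ideal.span ((fun s => monomial s (1:Kf)) '' Fset t) ≤
    Ideal.span ((fun s => monomial s (1:Kf)) '' Fset t) *
      Ideal.span ((fun s => monomial s (1:Kf)) '' Fset t) := by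
  rw [span_mon_mul, span_mon_mul, Ideal.span_le]
  rintro p ⟨u, ⟨b, hb, f, hf, rfl⟩, rfl⟩
  obtain ⟨k, hk, rfl⟩ := hb
  simp only [Set.mem_Iic] at hk
  rcases hf with ⟨j, rfl⟩ | ⟨j, rfl⟩
  · exact mon_mem_span.mpr ⟨Sv t j + Sv t j,
      Set.add_mem_add (Set.mem_union_right _ ⟨j, rfl⟩) (Set.mem_union_right _ ⟨j, rfl⟩),
      dom_blob_K hk j⟩
  · have hm : (if j = i0 then i1 else i0) ≠ j := by
      split_ifs with h
      · rw [h]; exact h01.symm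
      · exact fun hh => h hh.symm
    exact mon_mem_span.mpr ⟨Kv t j + Sv t (if j = i0 then i1 else i0),
      Set.add_mem_add (Set.mem_union_left _ ⟨j, rfl⟩) (Set.mem_union_right _ ⟨_, rfl⟩),
      dom_blob_S hk j _ hm⟩

lemma CC_le (h01 : i0 ≠ i1) :
    Ideal.span ((fun s => monomial s (1:Kf)) '' Bset i0 i1 t) *
      Ideal.span ((fun s => monomial s (1:Kf)) '' Bset i0 i1 t) ≤
    Ideal.span ((fun s => monomial s (1:Kf)) '' Fset t) *
      Ideal.span ((fun s => monomial s (1:Kf)) '' Fset t) := by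
  rw [span_mon_mul, span_mon_mul, Ideal.span_le]
  rintro p ⟨u, ⟨b, hb, b', hb', rfl⟩, rfl⟩
  obtain ⟨k, hk, rfl⟩ := hb
  obtain ⟨k', hk', rfl⟩ := hb'
  simp only [Set.mem_Iic] at hk hk'
  exact mon_mem_span.mpr ⟨Sv t i0 + Sv t i1,
    Set.add_mem_add (Set.mem_union_right _ ⟨i0, rfl⟩) (Set.mem_union_right _ ⟨i1, rfl⟩),
    dom_blob_blob h01 hk hk'⟩

lemma I_eq_sup :
    Ideal.span ((fun s => monomial s (1:Kf)) '' Aset i0 i1 t) =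
      Ideal.span ((fun s => monomial s (1:Kf)) '' Fset t) ⊔
      Ideal.span ((fun s => monomial s (1:Kf)) '' Bset i0 i1 t) := by
  rw [Aset, Set.image_union, Ideal.span_union]

lemma I_sq (h01 : i0 ≠ i1) :
    Ideal.span ((fun s => monomial s (1:Kf)) '' Aset i0 i1 t) *
    Ideal.span ((fun s => monomial s (1:Kf)) '' Aset i0 i1 t) =
    Ideal.span ((fun s => monomial s (1:Kf)) '' Fset t) *
    Ideal.span ((fun s => monomial s (1:Kf)) '' Fset t) := by
  set J := Ideal.span ((fun s => monomial s (1:Kf)) '' Fset t) with hJ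
  set C := Ideal.span ((fun s => monomial s (1:Kf)) '' Bset i0 i1 t) with hC
  rw [I_eq_sup, Ideal.sup_mul, Ideal.mul_sup, Ideal.mul_sup]
  refine le_antisymm ?_ (le_sup_left.trans le_sup_left)
  refine sup_le (sup_le le_rfl ?_) (sup_le ?_ ?_)
  · rw [mul_comm]; exact CJ_le h01
  · exact CJ_le h01
  · exact CC_le h01

lemma I_pow (h01 : i0 ≠ i1) {i : ℕ} (hi : 2 ≤ i) :
    Ideal.span ((fun s => monomial s (1:Kf)) '' Aset i0 i1 t) ^ i =
    Ideal.span ((fun s => monomial s (1:Kf)) '' Fset t) ^ i := by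
  set J := Ideal.span ((fun s => monomial s (1:Kf)) '' Fset t) with hJ
  set C := Ideal.span ((fun s => monomial s (1:Kf)) '' Bset i0 i1 t) with hC
  set I := Ideal.span ((fun s => monomial s (1:Kf)) '' Aset i0 i1 t) with hI
  obtain ⟨k, rfl⟩ : ∃ k, i = 2 + k := ⟨i-2, by omega⟩
  clear hi
  induction k with
  | zero =>
    rw [Nat.add_zero, pow_two, pow_two]
    exact I_sq h01
  | succ k ih =>
    have h1 : 2 + (k+1) = (2+k)+1 := by omega
    rw [h1, pow_succ, pow_succ, ih]
    rw [hI, I_eq_sup, ← hJ, ← hC, Ideal.mul_sup]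
    refine le_antisymm (sup_le le_rfl ?_) le_sup_left
    have h2 : (2+k) = (1+k)+1 := by omega
    calc J^(2+k) * C = J^(1+k) * (J * C) := by rw [h2, pow_succ, mul_assoc]
      _ ≤ J^(1+k) * (J * J) := Ideal.mul_mono_right (by rw [mul_comm]; exact CJ_le h01)
      _ = J^(2+k) * J := by rw [← mul_assoc, ← pow_succ, ← h2]

end ideals

section counting
variable {Kf : Type*} [Field Kf] {i0 i1 : Fin n} {t : ℕ}

open Pointwise

lemma J_pow_span (i : ℕ) (hi : 1 ≤ i) :
    ∃ W : Finset (Fin n →₀ ℕ), W.card ≤ (2*n)^i ∧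
      Ideal.span ((fun s => monomial s (1:Kf)) '' Fset t) ^ i =
        Ideal.span ((fun s => monomial s (1:Kf)) '' (W : Set (Fin n →₀ ℕ))) := by
  classical
  induction i, hi using Nat.le_induction with
  | base =>
    refine ⟨Finset.image (Kv t) Finset.univ ∪ Finset.image (Sv t) Finset.univ, ?_, ?_⟩
    · calc _ ≤ (Finset.image (Kv t) Finset.univ).card +
            (Finset.image (Sv (n := n) t) Finset.univ).card := Finset.card_union_le _ _
        _ ≤ n + n := Nat.add_le_add
            ((Finset.card_image_le).trans_eq (Finset.card_univ.trans (Fintype.card_fin n)))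
            ((Finset.card_image_le).trans_eq (Finset.card_univ.trans (Fintype.card_fin n)))
        _ ≤ (2*n)^1 := by rw [pow_one]; omega
    · rw [pow_one]
      congr 1
      simp [Fset, Set.image_union]
  | succ i hi ih =>
    obtain ⟨W, hcard, hspan⟩ := ih
    refine ⟨Finset.image (fun p => p.1 + p.2) (W ×ˢ (Finset.image (Kv t) Finset.univ ∪
        Finset.image (Sv t) Finset.univ)), ?_, ?_⟩
    · calc _ ≤ (W ×ˢ (Finset.image (Kv t) Finset.univ ∪
            Finset.image (Sv (n := n) t) Finset.univ)).card := Finset.card_image_le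
        _ = W.card * (Finset.image (Kv t) Finset.univ ∪
            Finset.image (Sv (n := n) t) Finset.univ).card := Finset.card_product _ _
        _ ≤ (2*n)^i * (2*n) := by
            refine Nat.mul_le_mul hcard ?_
            calc _ ≤ (Finset.image (Kv t) Finset.univ).card +
                (Finset.image (Sv (n := n) t) Finset.univ).card := Finset.card_union_le _ _
              _ ≤ n + n := Nat.add_le_add
                ((Finset.card_image_le).trans_eq (Finset.card_univ.trans (Fintype.card_fin n)))
                ((Finset.card_image_le).trans_eq (Finset.card_univ.trans (Fintype.card_fin n)))
              _ ≤ 2*n := by omega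
        _ = (2*n)^(i+1) := (pow_succ _ _).symm
    · rw [pow_succ, hspan, span_mon_mul]
      congr 1
      rw [Finset.coe_image, Finset.coe_product]
      rw [Set.add_image_prod]
      congr 1
      simp [Fset, Set.image_union]

lemma blob_in_minGen (h01 : i0 ≠ i1) (ht : 1 ≤ t) :
    (fun s => monomial s (1:Kf)) '' Bset i0 i1 t ⊆
      minGen (Ideal.span ((fun s => monomial s (1:Kf)) '' Aset i0 i1 t)) := by
  rintro p ⟨b, ⟨k, hk, rfl⟩, rfl⟩
  simp only [Set.mem_Iic] at hk
  exact mon_mem_minGen (Set.mem_union_right _ ⟨k, hk, rfl⟩) (blob_minimal h01 ht hk)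

lemma Bv_injective : Function.Injective (Bv i0 i1 t) := by
  intro k k' h
  have := congrArg (fun v : Fin n →₀ ℕ => v i0) h
  simp only [Bv_apply] at this
  simp at this
  omega

lemma Aset_finite : (Aset i0 i1 t).Finite := by
  refine Set.Finite.union (Set.Finite.union ?_ ?_) ?_
  · exact Set.finite_range _
  · exact Set.finite_range _
  · exact (Set.finite_Iic _).image _

end counting

end
end THP


/-- For every field `K` and all integers `n ≥ 2`, `d ≥ 2`, there is an `𝔪`-primary
monomial ideal `I ⊆ K[x₁,…,xₙ]` (i.e. a monomial ideal containing a power of each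
variable) with `|G(I)| > |G(I^i)|` for all `2 ≤ i ≤ d`. -/
theorem arbitrarily_high_tiny_powers (K : Type*) [Field K] (n d : ℕ)
    (hn : 2 ≤ n) (hd : 2 ≤ d) :
    ∃ I : Ideal (MvPolynomial (Fin n) K),
      (∃ S : Set (MvPolynomial (Fin n) K), (∀ p ∈ S, IsMonomial p) ∧ I = Ideal.span S) ∧
      (∀ j : Fin n, ∃ k : ℕ, 1 ≤ k ∧ (X j : MvPolynomial (Fin n) K) ^ k ∈ I) ∧
      (∀ i : ℕ, 2 ≤ i → i ≤ d → (minGen (I ^ i)).ncard < (minGen I).ncard) := by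
  classical
  set t : ℕ := (2*n)^d with htdef
  have ht : 1 ≤ t := Nat.one_le_pow _ _ (by omega)
  set i0 : Fin n := ⟨0, by omega⟩ with hi0
  set i1 : Fin n := ⟨1, by omega⟩ with hi1
  have h01 : i0 ≠ i1 := by
    rw [hi0, hi1]
    intro h
    simpa using congrArg Fin.val h
  refine ⟨Ideal.span ((fun s => monomial s (1:K)) '' THP.Aset i0 i1 t),
    ⟨_, fun p hp => ?_, rfl⟩, fun j => ?_, fun i hi2 hid => ?_⟩
  · obtain ⟨s, _, rfl⟩ := hp
    exact ⟨s, rfl⟩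
  · refine ⟨38*t, by omega, ?_⟩
    rw [X_pow_eq_monomial]
    refine mon_mem_span.mpr ⟨THP.Kv t j,
      Set.mem_union_left _ (Set.mem_union_left _ ⟨j, rfl⟩), ?_⟩
    rw [Finsupp.le_def]
    intro m
    rw [THP.Kv_apply, Finsupp.single_apply]
    split_ifs <;> omega
  · rw [THP.I_pow h01 hi2]
    obtain ⟨W, hcard, hspan⟩ := THP.J_pow_span (Kf := K) (t := t) i (by omega)
    rw [hspan]
    have h1 : (minGen (Ideal.span ((fun s => monomial s (1:K)) ''
        (W : Set (Fin n →₀ ℕ))))).ncard ≤ W.card := by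
      refine (Set.ncard_le_ncard (minGen_subset _) (W.finite_toSet.image _)).trans ?_
      rw [← Set.ncard_coe_finset W]
      exact Set.ncard_image_le W.finite_toSet
    have h2 : 6*t+1 ≤ (minGen (Ideal.span ((fun s => monomial s (1:K)) ''
        THP.Aset i0 i1 t))).ncard := by
      have hsub := THP.blob_in_minGen (Kf := K) h01 ht
      have hfin : (minGen (Ideal.span ((fun s => monomial s (1:K)) ''
          THP.Aset i0 i1 t))).Finite :=
        ((THP.Aset_finite).image _).subset (minGen_subset _)
      have hle := Set.ncard_le_ncard hsub hfin
      have himg : ((fun s => monomial s (1:K)) '' THP.Bset i0 i1 t).ncard = 6*t+1 := by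
        rw [Set.ncard_image_of_injective _ mon_inj]
        rw [THP.Bset, Set.ncard_image_of_injective _ THP.Bv_injective]
        rw [← Finset.coe_Iic, Set.ncard_coe_finset, Nat.card_Iic]
      omega
    have h3 : W.card ≤ t := hcard.trans (by
      rw [htdef]
      exact Nat.pow_le_pow_right (by omega) hid)
    omega
end

section
/- The product ideal JQ is contained in J²; that is, x₁^{2t}⋯xₙ^{2t} · J ⊆ J². -/
open MvPolynomial

/-- The monomial `μ = x₁ᵗ ⋯ xₙᵗ`. -/
noncomputable def mu (K : Type*) [Field K] (n t : ℕ) : MvPolynomial (Fin n) K :=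
  ∏ i : Fin n, X i ^ t

/-- The skeleton ideal `J = ⟨x₁^{4t},…,xₙ^{4t}, x₁^{2t}μ,…,xₙ^{2t}μ⟩`. -/
noncomputable def Jidl (K : Type*) [Field K] (n t : ℕ) : Ideal (MvPolynomial (Fin n) K) :=
  Ideal.span
    ((Set.range fun j : Fin n => (X j : MvPolynomial (Fin n) K) ^ (4 * t)) ∪
     (Set.range fun j : Fin n => (X j : MvPolynomial (Fin n) K) ^ (2 * t) * mu K n t))

/-- The monomial `q = μ² = x₁^{2t} ⋯ xₙ^{2t}`. -/
noncomputable def qmon (K : Type*) [Field K] (n t : ℕ) : MvPolynomial (Fin n) K :=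
  ∏ i : Fin n, X i ^ (2 * t)

/-- The principal ideal `Q = ⟨q⟩`. -/
noncomputable def Qidl (K : Type*) [Field K] (n t : ℕ) : Ideal (MvPolynomial (Fin n) K) :=
  Ideal.span {qmon K n t}

lemma qmon_eq_mu_sq (K : Type*) [Field K] (n t : ℕ) :
    qmon K n t = mu K n t * mu K n t := by
  simp only [qmon, mu, ← Finset.prod_mul_distrib, ← pow_add, two_mul]

lemma memJ1 (K : Type*) [Field K] (n t : ℕ) (j : Fin n) :
    (X j : MvPolynomial (Fin n) K) ^ (4 * t) ∈ Jidl K n t :=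
  Ideal.subset_span (Set.mem_union_left _ ⟨j, rfl⟩)

lemma memJ2 (K : Type*) [Field K] (n t : ℕ) (j : Fin n) :
    (X j : MvPolynomial (Fin n) K) ^ (2 * t) * mu K n t ∈ Jidl K n t :=
  Ideal.subset_span (Set.mem_union_right _ ⟨j, rfl⟩)

/-- `JQ ⊆ J²`, i.e. `x₁^{2t}⋯xₙ^{2t} · J ⊆ J²`. -/
theorem JQ_subset_J_sq (K : Type*) [Field K] (n t : ℕ) (hn : 2 ≤ n) (ht : 1 ≤ t) :
    Jidl K n t * Qidl K n t ≤ (Jidl K n t) ^ 2 := by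
  rw [pow_two]
  rw [Ideal.mul_le]
  intro r hr s hs
  have hs' : ∃ c, s = c * qmon K n t := by
    rw [Qidl, Ideal.mem_span_singleton] at hs
    obtain ⟨c, hc⟩ := hs
    exact ⟨c, by rw [hc, mul_comm]⟩
  obtain ⟨c, rfl⟩ := hs'
  have key : ∀ g ∈ ((Set.range fun j : Fin n => (X j : MvPolynomial (Fin n) K) ^ (4 * t)) ∪
     (Set.range fun j : Fin n => (X j : MvPolynomial (Fin n) K) ^ (2 * t) * mu K n t)),
      g * qmon K n t ∈ Jidl K n t * Jidl K n t := by
    rintro g (⟨j, rfl⟩ | ⟨j, rfl⟩)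
    · have : (X j : MvPolynomial (Fin n) K) ^ (4 * t) * qmon K n t =
          (X j ^ (2 * t) * mu K n t) * (X j ^ (2 * t) * mu K n t) := by
        rw [qmon_eq_mu_sq, show 4 * t = 2 * t + 2 * t by ring, pow_add]
        ring
      rw [this]
      exact Ideal.mul_mem_mul (memJ2 K n t j) (memJ2 K n t j)
    · -- pick i ≠ j
      have h1n : 1 < n := hn
      haveI : Nontrivial (Fin n) := Fin.nontrivial_iff_two_le.mpr hn
      obtain ⟨i, hij⟩ := exists_ne j
      have hi : i ∈ Finset.univ.erase j := Finset.mem_erase.mpr ⟨hij, Finset.mem_univ i⟩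
      have hq : qmon K n t = X j ^ (2 * t) * (X i ^ (2 * t) *
          ∏ k ∈ (Finset.univ.erase j).erase i, (X k : MvPolynomial (Fin n) K) ^ (2 * t)) := by
        rw [qmon, ← Finset.mul_prod_erase Finset.univ _ (Finset.mem_univ j),
          ← Finset.mul_prod_erase _ _ hi]
      rw [hq]
      have heq : X j ^ (2 * t) * mu K n t * (X j ^ (2 * t) * (X i ^ (2 * t) *
          ∏ k ∈ (Finset.univ.erase j).erase i, (X k : MvPolynomial (Fin n) K) ^ (2 * t))) =
          (∏ k ∈ (Finset.univ.erase j).erase i, (X k : MvPolynomial (Fin n) K) ^ (2 * t)) *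
          ((X j ^ (4 * t)) * (X i ^ (2 * t) * mu K n t)) := by
        rw [show 4 * t = 2 * t + 2 * t by ring, pow_add]
        ring
      rw [heq]
      exact Ideal.mul_mem_left _ _ (Ideal.mul_mem_mul (memJ1 K n t j) (memJ2 K n t i))
  revert hr
  rw [Jidl]
  intro hr
  induction hr using Submodule.span_induction with
  | mem g hg =>
      have h : g * (c * qmon K n t) = c * (g * qmon K n t) := by ring
      rw [h]
      exact Ideal.mul_mem_left (Jidl K n t * Jidl K n t) c (key g hg)
  | zero => simp
  | add a b _ _ ha hb => rw [add_mul]; exact Ideal.add_mem _ ha hb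
  | smul a x _ hx => rw [smul_eq_mul, mul_assoc]; exact Ideal.mul_mem_left _ _ hx
end

section
/- The set of monomials lying in Q but not in J is exactly { x₁^{α₁}⋯xₙ^{αₙ} : (α₁,…,αₙ) ∈ ℕⁿ with 2t ≤ αᵢ ≤ 3t−1 for every i }. -/
open MvPolynomial

/-! `Q` and `J` are monomial ideals, so a monomial `x^α` lies in one of them iff `α` dominates
the exponent vector of a generator. Membership in `Q` says `αᵢ ≥ 2t` for all `i`; given that,
`x_j^{2t} μ ∣ x^α` iff `α_j ≥ 3t`, which already covers `x_j^{4t} ∣ x^α`. -/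

namespace MvPolynomial

variable {σ R : Type*} [CommSemiring R]

theorem prod_univ_X_pow_eq_monomial [Fintype σ] (e : σ → ℕ) :
    ∏ i, (X i : MvPolynomial σ R) ^ e i = monomial (Finsupp.equivFunOnFinite.symm e) 1 := by
  simp only [Finsupp.equivFunOnFinite_symm_eq_sum, monomial_sum_one, X_pow_eq_monomial]

theorem monomial_one_mem_span_monomial_one_image_iff [Nontrivial R] {α : σ →₀ ℕ}
    {S : Set (σ →₀ ℕ)} :
    monomial α (1 : R) ∈ Ideal.span ((fun s => monomial s (1 : R)) '' S) ↔ ∃ s ∈ S, s ≤ α := by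
  classical
  simp [mem_ideal_span_monomial_image, support_monomial]

end MvPolynomial

theorem Finsupp.single_add_const_le_iff {σ : Type*} [Fintype σ] {j : σ} {a b : ℕ}
    {α : σ →₀ ℕ} :
    single j a + equivFunOnFinite.symm (fun _ => b) ≤ α ↔ a + b ≤ α j ∧ ∀ i, b ≤ α i := by
  constructor
  · intro h
    exact ⟨by simpa using h j, fun i => le_trans (by simp) (h i)⟩
  · rintro ⟨hj, hall⟩ i
    rcases eq_or_ne i j with rfl | hij
    · simpa using hj
    · simpa [single_eq_of_ne' hij.symm] using hall i

section

variable {K : Type*} [Field K] {n t : ℕ}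

theorem Qidl_eq_span_monomial :
    Qidl K n t = Ideal.span ((fun s => monomial s (1 : K)) ''
      {Finsupp.equivFunOnFinite.symm fun _ => 2 * t}) := by
  rw [Qidl, qmon, prod_univ_X_pow_eq_monomial, Set.image_singleton]

theorem Jidl_eq_span_monomial :
    Jidl K n t = Ideal.span ((fun s => monomial s (1 : K)) ''
      ((Set.range fun j : Fin n => Finsupp.single j (4 * t)) ∪
       (Set.range fun j : Fin n =>
          Finsupp.single j (2 * t) + Finsupp.equivFunOnFinite.symm fun _ => t))) := by
  rw [Jidl, mu, prod_univ_X_pow_eq_monomial]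
  simp only [X_pow_eq_monomial, monomial_mul, one_mul, Set.image_union, ← Set.range_comp,
    Function.comp_def]

theorem monomial_mem_Qidl_iff {α : Fin n →₀ ℕ} :
    monomial α (1 : K) ∈ Qidl K n t ↔ ∀ i, 2 * t ≤ α i := by
  rw [Qidl_eq_span_monomial, monomial_one_mem_span_monomial_one_image_iff]
  simp [Finsupp.le_def]

theorem monomial_mem_Jidl_iff {α : Fin n →₀ ℕ} :
    monomial α (1 : K) ∈ Jidl K n t ↔
      ∃ j, 4 * t ≤ α j ∨ (2 * t + t ≤ α j ∧ ∀ i, t ≤ α i) := by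
  rw [Jidl_eq_span_monomial, monomial_one_mem_span_monomial_one_image_iff]
  simp only [Set.mem_union, Set.mem_range, or_and_right, exists_or, exists_exists_eq_and,
    Finsupp.single_le_iff, Finsupp.single_add_const_le_iff]

end

theorem monomials_in_Q_not_in_J_general (K : Type*) [Field K] (n t : ℕ)
    (ht : 1 ≤ t) :
    {p : MvPolynomial (Fin n) K | IsMonomial p ∧ p ∈ Qidl K n t ∧ p ∉ Jidl K n t} =
    {p : MvPolynomial (Fin n) K |
      ∃ α : Fin n →₀ ℕ, (∀ i, 2 * t ≤ α i ∧ α i ≤ 3 * t - 1) ∧ p = monomial α 1} := by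
  ext p
  constructor
  · rintro ⟨⟨α, rfl⟩, hQ, hJ⟩
    rw [monomial_mem_Qidl_iff] at hQ
    rw [monomial_mem_Jidl_iff] at hJ
    push Not at hJ
    refine ⟨α, fun i => ⟨hQ i, ?_⟩, rfl⟩
    by_contra hi
    obtain ⟨k, hk⟩ := (hJ i).2 (by omega)
    have := hQ k
    omega
  · rintro ⟨α, hα, rfl⟩
    refine ⟨⟨α, rfl⟩, monomial_mem_Qidl_iff.2 fun i => (hα i).1, ?_⟩
    rw [monomial_mem_Jidl_iff]
    rintro ⟨j, hj⟩
    have := hα j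
    omega

/-- The monomials lying in `Q` but not in `J` are exactly the monomials
`x₁^{α₁}⋯xₙ^{αₙ}` with `2t ≤ αᵢ ≤ 3t−1` for every `i`. -/
theorem monomials_in_Q_not_in_J (K : Type*) [Field K] (n t : ℕ)
    (hn : 2 ≤ n) (ht : 1 ≤ t) :
    {p : MvPolynomial (Fin n) K | IsMonomial p ∧ p ∈ Qidl K n t ∧ p ∉ Jidl K n t} =
    {p : MvPolynomial (Fin n) K |
      ∃ α : Fin n →₀ ℕ, (∀ i, 2 * t ≤ α i ∧ α i ≤ 3 * t - 1) ∧ p = monomial α 1} :=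
  monomials_in_Q_not_in_J_general K n t ht
end

section
/- Let q₁,…,q_s be pairwise distinct monomials whose exponent vectors all lie in [2t,3t−1]ⁿ ∩ ℕⁿ and which all have the same total degree. Then the ideal I = J + ⟨q₁,…,q_s⟩ has minimal monomial generating set G(I) = G(J) ∪ {q₁,…,q_s}, so |G(I)| = 2n + s, and moreover I^i = J^i for every integer i ≥ 2. -/
/-!
Every exponent vector of a generator of `J` has a coordinate `≥ 3t` and, as `n ≥ 2`, a coordinate
`< 2t`, while the exponent vectors of the `qₐ` have all coordinates in `[2t, 3t)`. So no generator
of `J` is comparable with a `qₐ`, the generators of `J` are pairwise incomparable, and so are the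
`qₐ`, having equal degree: all `2n + s` generators of `I` are minimal.

For the powers it suffices that `⟨q₁,…,q_s⟩ · I ⊆ J²`: then `I² = J²`, and
`I^{i+1} = J^{i-1} · (J · I) ⊆ J^{i-1} · I² = J^{i+1}`. Since `qₐ ≥ (2t,…,2t)`, the product of `qₐ`
with `x_j^{4t}`, with `x_j^{2t}μ`, or with a `q_b` is divisible by `(x_j^{2t}μ)²`, by
`x_j^{4t} · x_k^{2t}μ` (`k ≠ j`), or by `x_j^{2t}μ · x_k^{2t}μ` (`k ≠ j`) respectively.
-/

open MvPolynomial

theorem Finsupp.eq_of_le_of_sum_eq {σ : Type*} [Fintype σ] {u v : σ →₀ ℕ} (h : u ≤ v)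
    (hsum : ∑ i, u i = ∑ i, v i) : u = v :=
  Finsupp.ext fun i => (Finset.sum_eq_sum_iff_of_le fun i _ => h i).mp hsum i (Finset.mem_univ i)

theorem Set.range_comp_sumElim {α β γ δ : Type*} (f : γ → δ) (g : α → γ) (h : β → γ) :
    (Set.range fun c => f (Sum.elim g h c)) =
      (Set.range fun a => f (g a)) ∪ Set.range fun b => f (h b) :=
  (congrArg Set.range (Sum.comp_elim f g h)).trans (Set.Sum.elim_range _ _)

namespace MvPolynomial

variable {R σ ι κ : Type*} [CommSemiring R]

theorem monomial_one_mem_of_le {P : Ideal (MvPolynomial σ R)} {u v : σ →₀ ℕ}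
    (h : monomial u (1 : R) ∈ P) (huv : u ≤ v) : monomial v (1 : R) ∈ P := by
  obtain ⟨w, rfl⟩ := le_iff_exists_add.mp huv
  rw [← mul_one (1 : R), ← monomial_mul]
  exact P.mul_mem_right _ h

theorem monomial_one_mem_span_range_iff [Nontrivial R] {f : ι → σ →₀ ℕ} {v : σ →₀ ℕ} :
    monomial v (1 : R) ∈ Ideal.span (Set.range fun a => monomial (f a) (1 : R)) ↔
      ∃ a, f a ≤ v := by
  classical
  rw [show (Set.range fun a => monomial (f a) (1 : R)) = (fun s => monomial s 1) '' Set.range f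
    from Set.range_comp (fun s => monomial s (1 : R)) f, mem_ideal_span_monomial_image,
    support_monomial, if_neg one_ne_zero]
  simp

theorem monomial_one_mem_span_range_sq_of_add_le {f : ι → σ →₀ ℕ} {a b : ι} {v : σ →₀ ℕ}
    (h : f a + f b ≤ v) :
    monomial v (1 : R) ∈ Ideal.span (Set.range fun a => monomial (f a) (1 : R)) ^ 2 := by
  refine monomial_one_mem_of_le ?_ h
  rw [sq, show monomial (f a + f b) (1 : R) = monomial (f a) 1 * monomial (f b) 1 by
    rw [monomial_mul, one_mul]]
  exact Ideal.mul_mem_mul (Ideal.subset_span ⟨a, rfl⟩) (Ideal.subset_span ⟨b, rfl⟩)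

theorem span_range_monomial_one_mul_le {f : ι → σ →₀ ℕ} {g : κ → σ →₀ ℕ}
    {P : Ideal (MvPolynomial σ R)} (h : ∀ a b, monomial (f a + g b) (1 : R) ∈ P) :
    Ideal.span (Set.range fun a => monomial (f a) (1 : R)) *
      Ideal.span (Set.range fun b => monomial (g b) (1 : R)) ≤ P := by
  rw [Ideal.span_mul_span', Ideal.span_le]
  rintro _ ⟨_, ⟨a, rfl⟩, _, ⟨b, rfl⟩, rfl⟩
  simpa only [monomial_mul, one_mul, SetLike.mem_coe] using h a b

theorem ncard_range_monomial_one [Nontrivial R] {f : ι → σ →₀ ℕ}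
    (hf : ∀ a b, f a ≤ f b → a = b) :
    (Set.range fun a => monomial (f a) (1 : R)).ncard = Nat.card ι :=
  Set.ncard_range_of_injective <| (monomial_left_injective one_ne_zero).comp
    fun a b hab => hf a b hab.le

end MvPolynomial

namespace Ideal

variable {R : Type*} [CommSemiring R] {I J Q : Ideal R}

theorem sup_sq_eq_sq_of_mul_le (h : Q * (J ⊔ Q) ≤ J ^ 2) : (J ⊔ Q) ^ 2 = J ^ 2 := by
  refine le_antisymm ?_ (pow_right_mono le_sup_left 2)
  have hQJ : J * Q ≤ J ^ 2 := (mul_comm J Q).le.trans ((mul_mono_right le_sup_left).trans h)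
  rw [sq (J ⊔ Q), sup_mul, mul_sup, ← sq]
  exact sup_le (sup_le le_rfl hQJ) h

theorem pow_eq_pow_of_sq_eq (hJI : J ≤ I) (h : I ^ 2 = J ^ 2) :
    ∀ i, 2 ≤ i → I ^ i = J ^ i := by
  intro i hi
  induction i, hi using Nat.le_induction with
  | base => exact h
  | succ i hi ih =>
    refine le_antisymm ?_ (pow_right_mono hJI _)
    obtain ⟨k, rfl⟩ : ∃ k, i = k + 1 := ⟨i - 1, by omega⟩
    calc I ^ (k + 1 + 1) = J ^ k * (J * I) := by rw [pow_succ, ih, pow_succ, mul_assoc]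
      _ ≤ J ^ k * I ^ 2 := mul_mono_right (sq I ▸ mul_mono_left hJI)
      _ = J ^ (k + 1 + 1) := by rw [h, ← pow_add]

end Ideal

theorem minGen_span_range_monomial {K σ ι : Type*} [Field K] {f : ι → σ →₀ ℕ}
    (hf : ∀ a b, f a ≤ f b → a = b) :
    minGen (Ideal.span (Set.range fun a => monomial (f a) (1 : K))) =
      Set.range fun a => monomial (f a) (1 : K) := by
  ext p
  constructor
  · rintro ⟨⟨v, rfl⟩, hmem, hmin⟩
    obtain ⟨a, ha⟩ := monomial_one_mem_span_range_iff.mp hmem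
    exact ⟨a, hmin _ ⟨f a, rfl⟩ (Ideal.subset_span ⟨a, rfl⟩)
      (monomial_one_dvd_monomial_one.mpr ha)⟩
  · rintro ⟨a, rfl⟩
    refine ⟨⟨f a, rfl⟩, Ideal.subset_span ⟨a, rfl⟩, ?_⟩
    rintro _ ⟨w, rfl⟩ hw hdvd
    obtain ⟨b, hb⟩ := monomial_one_mem_span_range_iff.mp hw
    have hwa := monomial_one_dvd_monomial_one.mp hdvd
    obtain rfl := hf b a (hb.trans hwa)
    rw [le_antisymm hwa hb]

section Skeleton

variable {n : ℕ} (t : ℕ)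

noncomputable def skeletonExp : Fin n ⊕ Fin n → (Fin n →₀ ℕ)
  | .inl j => Finsupp.single j (4 * t)
  | .inr j => Finsupp.single j (2 * t) + ∑ i, Finsupp.single i t

@[simp]
theorem skeletonExp_inl_apply (j i : Fin n) :
    skeletonExp t (.inl j) i = if j = i then 4 * t else 0 :=
  Finsupp.single_apply

@[simp]
theorem skeletonExp_inr_apply (j i : Fin n) :
    skeletonExp t (.inr j) i = if j = i then 3 * t else t := by
  simp only [skeletonExp, Finsupp.coe_add, Finsupp.coe_finsetSum, Pi.add_apply,
    Finset.sum_apply, Finsupp.single_apply, Finset.sum_ite_eq', Finset.mem_univ, ↓reduceIte]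
  split_ifs <;> omega

theorem Jidl_eq_span_skeletonExp (K : Type*) [Field K] (n t : ℕ) :
    Jidl K n t = Ideal.span (Set.range fun c => monomial (skeletonExp t c) (1 : K)) := by
  rw [Jidl, ← Set.Sum.elim_range]
  congr 2
  funext c
  rcases c with j | j
  · simp [skeletonExp, X_pow_eq_monomial]
  · simp [skeletonExp, X_pow_eq_monomial, mu, monomial_mul, ← monomial_sum_one]

theorem exists_three_mul_le_skeletonExp (c : Fin n ⊕ Fin n) :
    ∃ i, 3 * t ≤ skeletonExp t c i := by
  rcases c with j | j
  · exact ⟨j, by simp only [skeletonExp_inl_apply, ↓reduceIte]; omega⟩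
  · exact ⟨j, by simp only [skeletonExp_inr_apply, ↓reduceIte, le_refl]⟩

variable {t}

theorem exists_skeletonExp_lt_two_mul (hn : 2 ≤ n) (ht : 1 ≤ t) (c : Fin n ⊕ Fin n) :
    ∃ i, skeletonExp t c i < 2 * t := by
  have := Fin.nontrivial_iff_two_le.mpr hn
  rcases c with j | j <;> obtain ⟨i, hi⟩ := exists_ne j <;> exact ⟨i, by
    simp only [skeletonExp_inl_apply, skeletonExp_inr_apply, if_neg hi.symm]; omega⟩

theorem skeletonExp_le_imp_eq (hn : 2 ≤ n) (ht : 1 ≤ t) (c d : Fin n ⊕ Fin n)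
    (h : skeletonExp t c ≤ skeletonExp t d) : c = d := by
  have := Fin.nontrivial_iff_two_le.mpr hn
  rcases c with j | j <;> rcases d with k | k
  -- compare at the peak `j` of `c` and at a coordinate `i` off the peak `k` of `d`
  all_goals
    obtain ⟨i, hik⟩ := exists_ne k
    have hj := h j
    have hi := h i
    simp only [skeletonExp_inl_apply, skeletonExp_inr_apply, ↓reduceIte, if_neg hik.symm] at hj hi
    split_ifs at hj hi <;> first | omega | simp_all

theorem exists_skeletonExp_add_le_add_skeletonExp (hn : 2 ≤ n) {u : Fin n →₀ ℕ}
    (hu : ∀ i, 2 * t ≤ u i) (c : Fin n ⊕ Fin n) :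
    ∃ c₁ c₂, skeletonExp t c₁ + skeletonExp t c₂ ≤ u + skeletonExp t c := by
  have := Fin.nontrivial_iff_two_le.mpr hn
  rcases c with j | j
  · refine ⟨.inr j, .inr j, Finsupp.le_def.mpr fun i => ?_⟩
    have := hu i
    simp only [Finsupp.add_apply, skeletonExp_inl_apply, skeletonExp_inr_apply]
    split_ifs <;> omega
  · obtain ⟨k, hkj⟩ := exists_ne j
    refine ⟨.inl j, .inr k, Finsupp.le_def.mpr fun i => ?_⟩
    have := hu i
    simp only [Finsupp.add_apply, skeletonExp_inl_apply, skeletonExp_inr_apply]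
    split_ifs <;> omega

theorem exists_skeletonExp_add_le (hn : 2 ≤ n) {u v : Fin n →₀ ℕ}
    (hu : ∀ i, 2 * t ≤ u i) (hv : ∀ i, 2 * t ≤ v i) :
    ∃ c₁ c₂, skeletonExp t c₁ + skeletonExp t c₂ ≤ u + v := by
  have := Fin.nontrivial_iff_two_le.mpr hn
  obtain ⟨j, k, hjk⟩ := exists_pair_ne (Fin n)
  refine ⟨.inr j, .inr k, Finsupp.le_def.mpr fun i => ?_⟩
  have := hu i
  have := hv i
  simp only [Finsupp.add_apply, skeletonExp_inr_apply]
  split_ifs <;> omega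

end Skeleton

section Box

variable {n t s : ℕ} {q : Fin s → Fin n →₀ ℕ}

theorem sumElim_skeletonExp_le_imp_eq (hn : 2 ≤ n) (ht : 1 ≤ t) (hinj : Function.Injective q)
    (hbox : ∀ a i, 2 * t ≤ q a i ∧ q a i < 3 * t) (hdeg : ∀ a b, ∑ i, q a i = ∑ i, q b i)
    (c d : (Fin n ⊕ Fin n) ⊕ Fin s)
    (h : Sum.elim (skeletonExp t) q c ≤ Sum.elim (skeletonExp t) q d) : c = d := by
  rcases c with c | a <;> rcases d with d | b <;>
    simp only [Sum.elim_inl, Sum.elim_inr] at h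
  · exact congrArg _ (skeletonExp_le_imp_eq hn ht c d h)
  · obtain ⟨i, hi⟩ := exists_three_mul_le_skeletonExp t c
    exact absurd ((hbox b i).2) (not_lt.mpr (hi.trans (h i)))
  · obtain ⟨i, hi⟩ := exists_skeletonExp_lt_two_mul hn ht d
    exact absurd ((hbox a i).1) (not_le.mpr ((h i).trans_lt hi))
  · exact congrArg _ (hinj (Finsupp.eq_of_le_of_sum_eq h (hdeg a b)))

theorem exists_skeletonExp_add_le_add_sumElim (hn : 2 ≤ n) (hbox : ∀ a i, 2 * t ≤ q a i)
    (a : Fin s) (c : (Fin n ⊕ Fin n) ⊕ Fin s) :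
    ∃ c₁ c₂, skeletonExp t c₁ + skeletonExp t c₂ ≤ q a + Sum.elim (skeletonExp t) q c := by
  rcases c with c | b
  · exact exists_skeletonExp_add_le_add_skeletonExp hn (hbox a) c
  · exact exists_skeletonExp_add_le hn (hbox a) (hbox b)

end Box

/-- Adding `s` pairwise distinct monomials of the same total degree whose exponent
vectors lie in the box `[2t,3t−1]ⁿ` to the skeleton `J` produces an ideal `I` with
`G(I) = G(J) ∪ {q₁,…,q_s}`, hence `|G(I)| = 2n + s`, and `I^i = J^i` for all `i ≥ 2`. -/
theorem add_box_monomials_to_skeleton (K : Type*) [Field K] (n t : ℕ)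
    (hn : 2 ≤ n) (ht : 1 ≤ t)
    (s : ℕ) (q : Fin s → (Fin n →₀ ℕ)) (hinj : Function.Injective q)
    (hbox : ∀ a : Fin s, ∀ i : Fin n, 2 * t ≤ q a i ∧ q a i ≤ 3 * t - 1)
    (hdeg : ∀ a b : Fin s, ∑ i : Fin n, q a i = ∑ i : Fin n, q b i)
    (I : Ideal (MvPolynomial (Fin n) K))
    (hI : I = Jidl K n t ⊔
      Ideal.span (Set.range fun a : Fin s => (monomial (q a) 1 : MvPolynomial (Fin n) K))) :
    minGen I = minGen (Jidl K n t) ∪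
        (Set.range fun a : Fin s => (monomial (q a) 1 : MvPolynomial (Fin n) K)) ∧
    (minGen I).ncard = 2 * n + s ∧
    (∀ i : ℕ, 2 ≤ i → I ^ i = (Jidl K n t) ^ i) := by
  have hrange := Set.range_comp_sumElim (fun v => monomial v (1 : K)) (skeletonExp t) q
  have hbox' : ∀ a i, 2 * t ≤ q a i ∧ q a i < 3 * t := fun a i =>
    ⟨(hbox a i).1, by have := (hbox a i).2; omega⟩
  have hgen := sumElim_skeletonExp_le_imp_eq hn ht hinj hbox' hdeg
  have hJ := Jidl_eq_span_skeletonExp K n t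
  have hI' : I =
      Ideal.span (Set.range fun c => monomial (Sum.elim (skeletonExp t) q c) (1 : K)) := by
    rw [hI, hJ, ← Ideal.span_union, hrange]
  have hminI := minGen_span_range_monomial (K := K) hgen
  refine ⟨?_, ?_, ?_⟩
  · rw [hI', hminI, hJ, minGen_span_range_monomial (skeletonExp_le_imp_eq hn ht), hrange]
  · rw [hI', hminI, ncard_range_monomial_one hgen]
    simp only [Nat.card_eq_fintype_card, Fintype.card_sum, Fintype.card_fin]
    ring
  · refine Ideal.pow_eq_pow_of_sq_eq (hI ▸ le_sup_left) ?_
    rw [hI]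
    refine Ideal.sup_sq_eq_sq_of_mul_le ?_
    rw [← hI, hI', hJ]
    refine span_range_monomial_one_mul_le fun a c => ?_
    obtain ⟨c₁, c₂, h⟩ := exists_skeletonExp_add_le_add_sumElim hn (fun a i => (hbox' a i).1) a c
    exact monomial_one_mem_span_range_sq_of_add_le h
end

section
/- For all integers n ≥ 1 and t ≥ 1, setting c = ⌊n(t−1)/2⌋, the number of lattice points α ∈ ℕⁿ with 0 ≤ αᵢ ≤ t−1 for all i and α₁+⋯+αₙ = c equals the coefficient of x^c in the polynomial (1 + x + ⋯ + x^{t−1})ⁿ, and this coefficient is the maximum among all coefficients of (1 + x + ⋯ + x^{t−1})ⁿ. -/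
open Polynomial Finset

noncomputable def pp (t : ℕ) : Polynomial ℕ := ∑ k ∈ Finset.range t, (X : ℕ[X]) ^ k

lemma coeff_pp (t a : ℕ) : (pp t).coeff a = if a < t then 1 else 0 := by
  simp [pp, Polynomial.finset_sum_coeff, Polynomial.coeff_X_pow, ← Finset.mem_range]

lemma card_eq (t n c : ℕ) :
    ((pp t) ^ n).coeff c
      = ((Fintype.piFinset fun _ : Fin n => Finset.range t).filter
          fun α => ∑ i, α i = c).card := by
  have h1 : (pp t) ^ n = ∏ _i : Fin n, pp t := by simp
  rw [h1]
  simp only [pp]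
  rw [Finset.prod_univ_sum]
  simp only [Finset.prod_pow_eq_pow_sum]
  rw [Polynomial.finset_sum_coeff]
  simp only [Polynomial.coeff_X_pow]
  rw [Finset.card_filter]
  congr 1; ext g; simp [eq_comm]

lemma symm_card (t n j : ℕ) (ht : 1 ≤ t) (hj : j ≤ n * (t-1)) :
    ((pp t)^n).coeff j = ((pp t)^n).coeff (n*(t-1) - j) := by
  rw [card_eq, card_eq]
  apply Finset.card_bij' (fun α _ => fun i => t - 1 - α i) (fun α _ => fun i => t - 1 - α i)
  · intro α hα
    simp only [Finset.mem_filter, Fintype.mem_piFinset, Finset.mem_range] at hα ⊢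
    obtain ⟨h1, h2⟩ := hα
    constructor
    · intro i; omega
    · have key : (∑ i, α i) + ∑ i, (t - 1 - α i) = n * (t-1) := by
        rw [← Finset.sum_add_distrib]
        have : ∀ i : Fin n, α i + (t - 1 - α i) = t - 1 := fun i => by have := h1 i; omega
        simp [this]
      omega
  · intro α hα
    simp only [Finset.mem_filter, Fintype.mem_piFinset, Finset.mem_range] at hα ⊢
    obtain ⟨h1, h2⟩ := hα
    constructor
    · intro i; omega
    · have key : (∑ i, α i) + ∑ i, (t - 1 - α i) = n * (t-1) := by
        rw [← Finset.sum_add_distrib]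
        have : ∀ i : Fin n, α i + (t - 1 - α i) = t - 1 := fun i => by have := h1 i; omega
        simp [this]
      omega
  · intro α hα
    simp only [Finset.mem_filter, Fintype.mem_piFinset, Finset.mem_range] at hα
    funext i; have := hα.1 i; simp; omega
  · intro α hα
    simp only [Finset.mem_filter, Fintype.mem_piFinset, Finset.mem_range] at hα
    funext i; have := hα.1 i; simp; omega

lemma key_id (t n j : ℕ) (ht : 1 ≤ t) :
    ((pp t)^(n+1)).coeff j + ((pp t)^n).coeff (j+1)
      = ((pp t)^(n+1)).coeff (j+1)
        + (if t - 1 ≤ j then ((pp t)^n).coeff (j - (t-1)) else 0) := by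
  have hm : ∀ m, ((pp t)^(n+1)).coeff m
      = ∑ k ∈ Finset.range (m+1), (if k < t then ((pp t)^n).coeff (m - k) else 0) := by
    intro m
    rw [pow_succ', Polynomial.coeff_mul,
      Finset.Nat.sum_antidiagonal_eq_sum_range_succ
        (fun a b => (pp t).coeff a * ((pp t)^n).coeff b)]
    simp [coeff_pp, ite_mul]
  rw [hm j, hm (j+1)]
  -- peel first term of RHS sum over range (j+2)
  rw [Finset.sum_range_succ'
    (fun k => if k < t then ((pp t)^n).coeff (j+1 - k) else 0) (j+1)]
  have h0 : (if 0 < t then ((pp t)^n).coeff (j+1-0) else 0) = ((pp t)^n).coeff (j+1) := by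
    simp [Nat.pos_of_ne_zero]; omega
  rw [h0]
  have hsplit : (∑ k ∈ Finset.range (j + 1), if k < t then (pp t ^ n).coeff (j - k) else 0)
      = (∑ k ∈ Finset.range (j + 1), if k + 1 < t then (pp t ^ n).coeff (j + 1 - (k + 1)) else 0)
        + (if t - 1 ≤ j then (pp t ^ n).coeff (j - (t - 1)) else 0) := by
    have hpt : ∀ k, (if k < t then (pp t ^ n).coeff (j - k) else 0)
        = (if k + 1 < t then (pp t ^ n).coeff (j + 1 - (k + 1)) else 0)
          + (if k = t - 1 then (pp t ^ n).coeff (j - k) else 0) := by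
      intro k
      rcases Nat.lt_trichotomy k (t-1) with h | h | h
      · rw [if_pos (by omega), if_pos (by omega), if_neg (by omega)]
        simp
      · rw [if_pos (by omega), if_neg (by omega), if_pos h]
        simp
      · rw [if_neg (by omega), if_neg (by omega), if_neg (by omega)]
    simp only [hpt, Finset.sum_add_distrib]
    congr 1
    rw [Finset.sum_ite_eq' (Finset.range (j+1)) (t-1)
      (fun k => (pp t ^ n).coeff (j - k))]
    simp [Nat.lt_succ_iff]
  rw [hsplit]
  ring

lemma mono_coeff (t : ℕ) (ht : 1 ≤ t) : ∀ n, ∀ i j : ℕ, i ≤ j → 2*j ≤ n*(t-1) →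
    ((pp t)^n).coeff i ≤ ((pp t)^n).coeff j := by
  intro n
  induction n with
  | zero =>
    intro i j hij hj
    have hj0 : j = 0 := by simp at hj; omega
    have hi0 : i = 0 := by omega
    rw [hi0, hj0]
  | succ n IH =>
    -- adjacent step
    have adj : ∀ j : ℕ, 2*(j+1) ≤ (n+1)*(t-1) →
        ((pp t)^(n+1)).coeff j ≤ ((pp t)^(n+1)).coeff (j+1) := by
      intro j hj
      have hkey := key_id t n j ht
      have hchi : (if t - 1 ≤ j then ((pp t)^n).coeff (j - (t-1)) else 0)
          ≤ ((pp t)^n).coeff (j+1) := by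
        by_cases hcase : t - 1 ≤ j
        · rw [if_pos hcase]
          set m := n * (t-1) with hmdef
          have hexp : (n+1)*(t-1) = m + (t-1) := by rw [hmdef]; ring
          by_cases h2 : 2*(j+1) ≤ m
          · exact IH (j - (t-1)) (j+1) (by omega) h2
          · -- reflect
            have hv : j + 1 ≤ m := by
              by_contra hcon
              push_neg at hcon
              have ht2 : 2 ≤ t := by
                rcases Nat.lt_or_ge t 2 with h | h
                · interval_cases t <;> omega
                · exact h
              omega
            rw [symm_card t n (j+1) ht hv]
            exact IH (j - (t-1)) (m - (j+1)) (by omega) (by omega)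
        · simp [hcase]
      omega
    -- general monotone via chaining
    intro i j hij hj
    induction j with
    | zero => interval_cases i; rfl
    | succ j IH2 =>
      rcases Nat.lt_or_ge i (j+1) with h | h
      · calc ((pp t)^(n+1)).coeff i ≤ ((pp t)^(n+1)).coeff j := IH2 (by omega) (by omega)
          _ ≤ ((pp t)^(n+1)).coeff (j+1) := adj j hj
      · have : i = j+1 := by omega
        rw [this]

lemma vanish_coeff (t n j : ℕ) (ht : 1 ≤ t) (hj : n*(t-1) < j) : ((pp t)^n).coeff j = 0 := by
  rw [card_eq, Finset.card_eq_zero, Finset.filter_eq_empty_iff]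
  intro α hα
  simp only [Fintype.mem_piFinset, Finset.mem_range] at hα
  intro hsum
  have hle : ∑ i, α i ≤ ∑ _i : Fin n, (t-1) := by
    apply Finset.sum_le_sum
    intro i _
    have := hα i; omega
  simp only [Finset.sum_const, Finset.card_univ, Fintype.card_fin, smul_eq_mul] at hle
  omega

lemma max_coeff (t n : ℕ) (ht : 1 ≤ t) (j : ℕ) :
    ((pp t)^n).coeff j ≤ ((pp t)^n).coeff (n*(t-1)/2) := by
  set m := n*(t-1) with hm
  have hc2 : 2*(m/2) ≤ m := by omega
  have case1 : ∀ i : ℕ, 2*i ≤ m → ((pp t)^n).coeff i ≤ ((pp t)^n).coeff (m/2) :=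
    fun i hi => mono_coeff t ht n i (m/2) (by omega) hc2
  rcases le_or_gt (2*j) m with h | h
  · exact case1 j h
  · rcases le_or_gt j m with h2 | h2
    · rw [symm_card t n j ht h2]
      exact case1 (m - j) (by omega)
    · rw [vanish_coeff t n j ht h2]
      exact Nat.zero_le _



/-- For `n, t ≥ 1` and `c = ⌊n(t−1)/2⌋`, the number of lattice points `α ∈ ℕⁿ` with
`αᵢ ≤ t−1` for all `i` and `α₁+⋯+αₙ = c` equals the coefficient of `x^c` in
`(1 + x + ⋯ + x^{t−1})ⁿ`, and this coefficient is the largest coefficient of that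
polynomial. -/
theorem central_cross_section_count (n t : ℕ) (hn : 1 ≤ n) (ht : 1 ≤ t) :
    {α : Fin n → ℕ | (∀ i, α i ≤ t - 1) ∧ ∑ i, α i = n * (t - 1) / 2}.ncard
      = ((∑ k ∈ Finset.range t, (Polynomial.X : Polynomial ℕ) ^ k) ^ n).coeff
          (n * (t - 1) / 2) ∧
    ∀ j : ℕ,
      ((∑ k ∈ Finset.range t, (Polynomial.X : Polynomial ℕ) ^ k) ^ n).coeff j
        ≤ ((∑ k ∈ Finset.range t, (Polynomial.X : Polynomial ℕ) ^ k) ^ n).coeff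
            (n * (t - 1) / 2) := by
  have hpp : (∑ k ∈ Finset.range t, (Polynomial.X : Polynomial ℕ) ^ k) = pp t := rfl
  rw [hpp]
  constructor
  · rw [card_eq]
    have hset : {α : Fin n → ℕ | (∀ i, α i ≤ t - 1) ∧ ∑ i, α i = n * (t - 1) / 2}
        = ↑((Fintype.piFinset fun _ : Fin n => Finset.range t).filter
            fun α => ∑ i, α i = n * (t-1) / 2) := by
      ext α
      simp only [Set.mem_setOf_eq, Finset.coe_filter, Fintype.mem_piFinset, Finset.mem_range]
      constructor
      · rintro ⟨h1, h2⟩; exact ⟨fun i => by have := h1 i; omega, h2⟩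
      · rintro ⟨h1, h2⟩; exact ⟨fun i => by have := h1 i; omega, h2⟩
    rw [hset, Set.ncard_coe_finset]
  · exact max_coeff t n ht
end

section
/- Suppose m ≥ 5 and the following divisibility conditions hold in K[x,y]: u₁u_m | u₂u_{m−1}; u₁u_{m−1} | u₂u₃; u₁u_{m−1} | u_{m−2}²; u₂² | u₁u₃; u₂² | u₁u_{m−2}; u₂u_m | u₃u_{m−1}; u₂u_m | u_{m−2}u_{m−1}; u_{m−1}² | u₃u_m; u_{m−1}² | u_{m−2}u_m. Then G(I²) = {u₁², u₁u₂, u₂², u₁u_{m−1}, u₁u_m, u₂u_m, u_{m−1}², u_{m−1}u_m, u_m²}. -/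
open MvPolynomial

namespace TS

lemma mem_span {K : Type*} [Field K] {σ : Type*} (T : Set (σ →₀ ℕ)) (f : σ →₀ ℕ) :
    (monomial f (1:K)) ∈ Ideal.span ((fun e => monomial e (1:K)) '' T) ↔ ∃ t ∈ T, t ≤ f := by
  rw [mem_ideal_span_monomial_image]
  constructor
  · intro h
    refine h f ?_
    classical
    simp [support_monomial]
  · intro h xi hxi
    classical
    simp only [support_monomial, if_neg (one_ne_zero (α := K)), Finset.mem_singleton] at hxi
    subst hxi
    exact h

lemma minGen_eq_image {K : Type*} [Field K] {σ : Type*} (T S : Set (σ →₀ ℕ))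
    (hST : S ⊆ T)
    (cov : ∀ t ∈ T, ∃ s ∈ S, s ≤ t)
    (hmin : ∀ s ∈ S, ∀ t ∈ T, t ≤ s → t = s) :
    minGen (Ideal.span ((fun e => monomial e (1:K)) '' T)) = (fun e => monomial e (1:K)) '' S := by
  ext p
  constructor
  · rintro ⟨⟨f, rfl⟩, hpI, hminp⟩
    obtain ⟨t, htT, htf⟩ := (mem_span T f).mp hpI
    obtain ⟨s, hsS, hst⟩ := cov t htT
    have hq : (monomial s (1:K)) ∈ Ideal.span ((fun e => monomial e (1:K)) '' T) :=
      (mem_span T s).mpr ⟨s, hST hsS, le_rfl⟩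
    have hdvd : (monomial s (1:K)) ∣ monomial f 1 :=
      monomial_dvd_monomial.mpr ⟨Or.inr (hst.trans htf), dvd_rfl⟩
    exact ⟨s, hsS, hminp _ ⟨s, rfl⟩ hq hdvd⟩
  · rintro ⟨s, hsS, rfl⟩
    refine ⟨⟨s, rfl⟩, (mem_span T s).mpr ⟨s, hST hsS, le_rfl⟩, ?_⟩
    rintro q ⟨g, rfl⟩ hqI hqd
    obtain ⟨t, htT, htg⟩ := (mem_span T g).mp hqI
    have hgs : g ≤ s := ((monomial_dvd_monomial.mp hqd).1).resolve_left (one_ne_zero)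
    have hts : t = s := hmin s hsS t htT (htg.trans hgs)
    have : g = s := le_antisymm hgs (hts ▸ htg)
    rw [this]




lemma steps_dec (a : ℕ → ℕ) (m : ℕ) (h : ∀ i, 1 ≤ i → i < m → a (i + 1) < a i) :
    ∀ j i, 1 ≤ i → i < j → j ≤ m → a j < a i := by
  intro j
  induction j with
  | zero => intro i _ h2 _; omega
  | succ k ih =>
    intro i hi hik hkm
    rcases Nat.lt_or_ge i k with h' | h'
    · exact lt_trans (h k (by omega) (by omega)) (ih i hi h' (by omega))
    · have : i = k := by omega
      subst this
      exact h i hi (by omega)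

lemma steps_inc (b : ℕ → ℕ) (m : ℕ) (h : ∀ i, 1 ≤ i → i < m → b i < b (i + 1)) :
    ∀ j i, 1 ≤ i → i < j → j ≤ m → b i < b j := by
  intro j
  induction j with
  | zero => intro i _ h2 _; omega
  | succ k ih =>
    intro i hi hik hkm
    rcases Nat.lt_or_ge i k with h' | h'
    · exact lt_trans (ih i hi h' (by omega)) (h k (by omega) (by omega))
    · have : i = k := by omega
      subst this
      exact h i hi (by omega)

section Arith

variable (m : ℕ) (a b : ℕ → ℕ)

/-- the nine distinguished index pairs -/
def P9 (m k l : ℕ) : Prop :=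
  (k = 1 ∧ l = 1) ∨ (k = 1 ∧ l = 2) ∨ (k = 2 ∧ l = 2) ∨ (k = 1 ∧ l = m - 1) ∨
    (k = 1 ∧ l = m) ∨ (k = 2 ∧ l = m) ∨ (k = m - 1 ∧ l = m - 1) ∨
    (k = m - 1 ∧ l = m) ∨ (k = m ∧ l = m)

variable (hm : 5 ≤ m)
  (has : ∀ i j, 1 ≤ i → i < j → j ≤ m → a j < a i)
  (hbs : ∀ i j, 1 ≤ i → i < j → j ≤ m → b i < b j)
  (A2 : a 1 + a m ≤ a 2 + a (m - 1)) (B2 : b 1 + b m ≤ b 2 + b (m - 1))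
  (A31 : a 1 + a (m - 1) ≤ a 2 + a 3) (B31 : b 1 + b (m - 1) ≤ b 2 + b 3)
  (A32 : a 1 + a (m - 1) ≤ a (m - 2) + a (m - 2))
  (B32 : b 1 + b (m - 1) ≤ b (m - 2) + b (m - 2))
  (A41 : a 2 + a 2 ≤ a 1 + a 3) (B41 : b 2 + b 2 ≤ b 1 + b 3)
  (A42 : a 2 + a 2 ≤ a 1 + a (m - 2)) (B42 : b 2 + b 2 ≤ b 1 + b (m - 2))
  (A51 : a 2 + a m ≤ a 3 + a (m - 1)) (B51 : b 2 + b m ≤ b 3 + b (m - 1))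
  (A52 : a 2 + a m ≤ a (m - 2) + a (m - 1)) (B52 : b 2 + b m ≤ b (m - 2) + b (m - 1))
  (A61 : a (m - 1) + a (m - 1) ≤ a 3 + a m) (B61 : b (m - 1) + b (m - 1) ≤ b 3 + b m)
  (A62 : a (m - 1) + a (m - 1) ≤ a (m - 2) + a m)
  (B62 : b (m - 1) + b (m - 1) ≤ b (m - 2) + b m)

include hm has hbs A2 B2 A31 B31 A32 B32 A41 B41 A42 B42 A51 B51 A52 B52 A61 B61 A62 B62 in
lemma minOrd (k l : ℕ) (hkl : P9 m k l) (i j : ℕ) (hi : 1 ≤ i) (hij : i ≤ j) (hj : j ≤ m)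
    (hA : a i + a j ≤ a k + a l) (hB : b i + b j ≤ b k + b l) :
    a i + a j = a k + a l ∧ b i + b j = b k + b l := by
  have haM : ∀ i j, 1 ≤ i → i ≤ j → j ≤ m → a j ≤ a i := by
    intro i j h1 h2 h3
    rcases eq_or_lt_of_le h2 with rfl | h
    · exact le_rfl
    · exact (has i j h1 h h3).le
  have hbM : ∀ i j, 1 ≤ i → i ≤ j → j ≤ m → b i ≤ b j := by
    intro i j h1 h2 h3
    rcases eq_or_lt_of_le h2 with rfl | h
    · exact le_rfl
    · exact (hbs i j h1 h h3).le
  rcases hkl with ⟨rfl, rfl⟩ | ⟨rfl, rfl⟩ | ⟨rfl, rfl⟩ | ⟨rfl, rfl⟩ | ⟨rfl, hl⟩ |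
    ⟨rfl, hl⟩ | ⟨rfl, rfl⟩ | ⟨rfl, hl⟩ | ⟨hk, hl⟩
  · -- (1,1)
    have hi1 : i = 1 := by
      by_contra h
      have h1 := hbs 1 i (by omega) (by omega) (by omega)
      have h2 := hbM 1 j (by omega) (by omega) (by omega)
      omega
    subst hi1
    have hj1 : j = 1 := by
      by_contra h
      have h1 := hbs 1 j (by omega) (by omega) (by omega)
      omega
    subst hj1; exact ⟨rfl, rfl⟩
  · -- (1,2)
    have hi1 : i = 1 := by
      by_contra h
      have h1 := hbM 2 i (by omega) (by omega) (by omega)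
      have h2 := hbM 2 j (by omega) (by omega) (by omega)
      have h3 := hbs 1 2 (by omega) (by omega) (by omega)
      omega
    subst hi1
    have hj2 : j = 2 := by
      by_contra h
      rcases Nat.lt_or_ge j 2 with h' | h'
      · have := has j 2 (by omega) (by omega) (by omega)
        omega
      · have := hbs 2 j (by omega) (by omega) (by omega)
        omega
    subst hj2; exact ⟨rfl, rfl⟩
  · -- (2,2)
    have hile : i ≤ 2 := by
      by_contra h
      have h1 := hbM 3 i (by omega) (by omega) (by omega)
      have h2 := hbM 3 j (by omega) (by omega) (by omega)
      have h3 := hbs 2 3 (by omega) (by omega) (by omega)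
      omega
    rcases (by omega : i = 1 ∨ i = 2) with rfl | rfl
    · have hj3 : j = 3 := by
        by_contra h
        rcases Nat.lt_or_ge j 3 with h' | h'
        · have := has j 3 (by omega) (by omega) (by omega)
          omega
        · have := hbs 3 j (by omega) (by omega) (by omega)
          omega
      subst hj3
      exact ⟨by omega, by omega⟩
    · have hj2 : j = 2 := by
        by_contra h
        have := hbs 2 j (by omega) (by omega) (by omega)
        omega
      subst hj2; exact ⟨rfl, rfl⟩
  · -- (1, m-1)
    rcases (by omega : i = 1 ∨ i = 2 ∨ 3 ≤ i) with rfl | rfl | h3i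
    · have hjge : m - 1 ≤ j := by
        by_contra h
        have := has j (m - 1) (by omega) (by omega) (by omega)
        omega
      have hjle : j ≤ m - 1 := by
        by_contra h
        have := hbs (m - 1) j (by omega) (by omega) (by omega)
        omega
      have hj' : j = m - 1 := by omega
      subst hj'; exact ⟨rfl, rfl⟩
    · have hj3 : j ≤ 3 := by
        by_contra h
        have := hbs 3 j (by omega) (by omega) (by omega)
        omega
      have hj : j = 3 := by
        rcases (by omega : j = 2 ∨ j = 3) with rfl | rfl
        · exfalso
          have := has 2 (m - 2) (by omega) (by omega) (by omega)
          omega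
        · rfl
      subst hj
      exact ⟨by omega, by omega⟩
    · have hjle : j ≤ m - 2 := by
        by_contra h
        have h1 := hbM (m - 1) j (by omega) (by omega) (by omega)
        have h2 := hbs 1 3 (by omega) (by omega) (by omega)
        have h3 := hbM 3 i (by omega) (by omega) (by omega)
        omega
      have h4 := haM i (m - 2) (by omega) (by omega) (by omega)
      have h5 := haM j (m - 2) (by omega) (by omega) (by omega)
      have him : i = m - 2 := by
        by_contra h
        have := has i (m - 2) (by omega) (by omega) (by omega)
        omega
      have hjm : j = m - 2 := by
        by_contra h
        have := has j (m - 2) (by omega) (by omega) (by omega)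
        omega
      subst him; subst hjm
      exact ⟨by omega, by omega⟩
  · -- (1, m)
    rw [hl] at hA hB ⊢
    rcases (by omega : i = 1 ∨ i = 2 ∨ 3 ≤ i) with rfl | rfl | h3i
    · have hjm : j = m := by
        by_contra h
        have := has j m (by omega) (by omega) (by omega)
        omega
      rw [hjm]; exact ⟨rfl, rfl⟩
    · have hjle : j ≤ m - 1 := by
        by_contra h
        have h1 := hbM m j (by omega) (by omega) (by omega)
        have h2 := hbs 1 2 (by omega) (by omega) (by omega)
        omega
      have hjge : m - 1 ≤ j := by
        by_contra h
        have := has j (m - 1) (by omega) (by omega) (by omega)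
        omega
      have hj' : j = m - 1 := by omega
      subst hj'
      exact ⟨by omega, by omega⟩
    · exfalso
      have hjle : j ≤ m - 2 := by
        by_contra h
        have h1 := hbM (m - 1) j (by omega) (by omega) (by omega)
        have h2 := hbs 2 3 (by omega) (by omega) (by omega)
        have h3 := hbM 3 i (by omega) (by omega) (by omega)
        omega
      have h4 := haM i (m - 2) (by omega) (by omega) (by omega)
      have h5 := haM j (m - 2) (by omega) (by omega) (by omega)
      have h6 := has (m - 1) m (by omega) (by omega) (by omega)
      omega
  · -- (2, m)
    rw [hl] at hA hB ⊢
    rcases (by omega : j ≤ m - 2 ∨ j = m - 1 ∨ j = m) with hjle | rfl | hjm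
    · exfalso
      have h4 := haM i (m - 2) (by omega) (by omega) (by omega)
      have h5 := haM j (m - 2) (by omega) (by omega) (by omega)
      have h6 := has (m - 2) (m - 1) (by omega) (by omega) (by omega)
      omega
    · have hile : i ≤ 3 := by
        by_contra h
        have := hbs 3 i (by omega) (by omega) (by omega)
        omega
      have hige : m - 2 ≤ i := by
        by_contra h
        have := has i (m - 2) (by omega) (by omega) (by omega)
        omega
      have hi' : i = m - 2 := by omega
      subst hi'
      exact ⟨by omega, by omega⟩
    · rw [hjm] at hA hB ⊢
      have hile : i ≤ 2 := by
        by_contra h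
        have := hbs 2 i (by omega) (by omega) (by omega)
        omega
      have hi2 : i = 2 := by
        by_contra h
        have hi1 : i = 1 := by omega
        subst hi1
        have := has 1 2 (by omega) (by omega) (by omega)
        omega
      subst hi2; exact ⟨rfl, rfl⟩
  · -- (m-1, m-1)
    rcases (by omega : j ≤ m - 2 ∨ j = m - 1 ∨ j = m) with hjle | rfl | hjm
    · exfalso
      have h4 := haM i (m - 2) (by omega) (by omega) (by omega)
      have h5 := haM j (m - 2) (by omega) (by omega) (by omega)
      have h6 := has (m - 2) (m - 1) (by omega) (by omega) (by omega)
      omega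
    · have hi' : i = m - 1 := by
        by_contra h
        have := has i (m - 1) (by omega) (by omega) (by omega)
        omega
      subst hi'; exact ⟨rfl, rfl⟩
    · rw [hjm] at hA hB ⊢
      have hige : m - 2 ≤ i := by
        by_contra h
        have := has i (m - 2) (by omega) (by omega) (by omega)
        omega
      have hile : i ≤ m - 2 := by
        by_contra h
        have h1 := hbM (m - 1) i (by omega) (by omega) (by omega)
        have h2 := hbs (m - 1) m (by omega) (by omega) (by omega)
        omega
      have hi' : i = m - 2 := by omega
      subst hi'
      exact ⟨by omega, by omega⟩
  · -- (m-1, m)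
    rw [hl] at hA hB ⊢
    rcases (by omega : j ≤ m - 1 ∨ j = m) with hjle | hjm
    · exfalso
      have h4 := haM i (m - 1) (by omega) (by omega) (by omega)
      have h5 := haM j (m - 1) (by omega) (by omega) (by omega)
      have h6 := has (m - 1) m (by omega) (by omega) (by omega)
      omega
    · rw [hjm] at hA hB ⊢
      have hige : m - 1 ≤ i := by
        by_contra h
        have := has i (m - 1) (by omega) (by omega) (by omega)
        omega
      have hile : i ≤ m - 1 := by
        by_contra h
        have him : i = m := by omega
        rw [him] at hB
        have := hbs (m - 1) m (by omega) (by omega) (by omega)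
        omega
      have hi' : i = m - 1 := by omega
      subst hi'; exact ⟨rfl, rfl⟩
  · -- (m, m)
    rw [hk, hl] at hA hB ⊢
    have hj' : j = m := by
      by_contra h
      have h1 := has j m (by omega) (by omega) (by omega)
      have h2 := haM i m (by omega) (by omega) (by omega)
      omega
    rw [hj'] at hA hB ⊢
    have hi' : i = m := by
      by_contra h
      have := has i m (by omega) (by omega) (by omega)
      omega
    rw [hi']; exact ⟨rfl, rfl⟩

include hm has hbs A2 B2 A31 B31 A32 B32 A41 B41 A42 B42 A51 B51 A52 B52 A61 B61 A62 B62 in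
lemma minU (k l : ℕ) (hkl : P9 m k l) (i j : ℕ) (hi : 1 ≤ i) (hi' : i ≤ m)
    (hj : 1 ≤ j) (hj' : j ≤ m)
    (hA : a i + a j ≤ a k + a l) (hB : b i + b j ≤ b k + b l) :
    a i + a j = a k + a l ∧ b i + b j = b k + b l := by
  rcases le_total i j with h | h
  · exact minOrd m a b hm has hbs A2 B2 A31 B31 A32 B32 A41 B41 A42 B42 A51 B51 A52 B52
      A61 B61 A62 B62 k l hkl i j hi h hj' hA hB
  · have := minOrd m a b hm has hbs A2 B2 A31 B31 A32 B32 A41 B41 A42 B42 A51 B51 A52 B52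
      A61 B61 A62 B62 k l hkl j i hj h hi' (by omega) (by omega)
    omega

include hm has hbs A2 B2 A31 B31 A32 B32 A41 B41 A42 B42 A51 B51 A52 B52 A61 B61 A62 B62 in
lemma covOrd (i j : ℕ) (hi : 1 ≤ i) (hij : i ≤ j) (hj : j ≤ m) :
    ∃ k l, P9 m k l ∧ a k + a l ≤ a i + a j ∧ b k + b l ≤ b i + b j := by
  have haM : ∀ i j, 1 ≤ i → i ≤ j → j ≤ m → a j ≤ a i := by
    intro i j h1 h2 h3
    rcases eq_or_lt_of_le h2 with rfl | h
    · exact le_rfl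
    · exact (has i j h1 h h3).le
  have hbM : ∀ i j, 1 ≤ i → i ≤ j → j ≤ m → b i ≤ b j := by
    intro i j h1 h2 h3
    rcases eq_or_lt_of_le h2 with rfl | h
    · exact le_rfl
    · exact (hbs i j h1 h h3).le
  rcases (by omega : i = 1 ∨ i = 2 ∨ 3 ≤ i) with rfl | rfl | h3i
  · rcases (by omega : j = 1 ∨ j = 2 ∨ (3 ≤ j ∧ j ≤ m - 2) ∨ j = m - 1 ∨ j = m) with
      rfl | rfl | ⟨hj3, hjm2⟩ | rfl | hjm
    · exact ⟨1, 1, Or.inl ⟨rfl, rfl⟩, le_rfl, le_rfl⟩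
    · exact ⟨1, 2, Or.inr (Or.inl ⟨rfl, rfl⟩), le_rfl, le_rfl⟩
    · refine ⟨2, 2, Or.inr (Or.inr (Or.inl ⟨rfl, rfl⟩)), ?_, ?_⟩
      · have := haM j (m - 2) (by omega) (by omega) (by omega)
        omega
      · have := hbM 3 j (by omega) (by omega) (by omega)
        omega
    · exact ⟨1, m - 1, Or.inr (Or.inr (Or.inr (Or.inl ⟨rfl, rfl⟩))), le_rfl, le_rfl⟩
    · rw [hjm]
      exact ⟨1, m, Or.inr (Or.inr (Or.inr (Or.inr (Or.inl ⟨rfl, rfl⟩)))), le_rfl, le_rfl⟩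
  · rcases (by omega : j = 2 ∨ (3 ≤ j ∧ j ≤ m - 2) ∨ j = m - 1 ∨ j = m) with
      rfl | ⟨hj3, hjm2⟩ | rfl | hjm
    · exact ⟨2, 2, Or.inr (Or.inr (Or.inl ⟨rfl, rfl⟩)), le_rfl, le_rfl⟩
    · refine ⟨1, m - 1, Or.inr (Or.inr (Or.inr (Or.inl ⟨rfl, rfl⟩))), ?_, ?_⟩
      · have h1 := haM 2 (m - 2) (by omega) (by omega) (by omega)
        have h2 := haM j (m - 2) (by omega) (by omega) (by omega)
        omega
      · have := hbM 3 j (by omega) (by omega) (by omega)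
        omega
    · exact ⟨1, m, Or.inr (Or.inr (Or.inr (Or.inr (Or.inl ⟨rfl, rfl⟩)))), by omega, by omega⟩
    · rw [hjm]
      exact ⟨2, m, Or.inr (Or.inr (Or.inr (Or.inr (Or.inr (Or.inl ⟨rfl, rfl⟩))))),
        le_rfl, le_rfl⟩
  · rcases (by omega : j ≤ m - 2 ∨ j = m - 1 ∨ j = m) with hjle | rfl | hjm
    · refine ⟨1, m - 1, Or.inr (Or.inr (Or.inr (Or.inl ⟨rfl, rfl⟩))), ?_, ?_⟩
      · have h1 := haM i (m - 2) (by omega) (by omega) (by omega)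
        have h2 := haM j (m - 2) (by omega) (by omega) (by omega)
        omega
      · have h1 := hbM 2 i (by omega) (by omega) (by omega)
        have h2 := hbM 3 j (by omega) (by omega) (by omega)
        omega
    · rcases (by omega : i = m - 1 ∨ i ≤ m - 2) with rfl | hile
      · exact ⟨m - 1, m - 1, Or.inr (Or.inr (Or.inr (Or.inr (Or.inr (Or.inr
          (Or.inl ⟨rfl, rfl⟩)))))), le_rfl, le_rfl⟩
      · refine ⟨2, m, Or.inr (Or.inr (Or.inr (Or.inr (Or.inr (Or.inl ⟨rfl, rfl⟩))))), ?_, ?_⟩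
        · have := haM i (m - 2) (by omega) (by omega) (by omega)
          omega
        · have := hbM 3 i (by omega) (by omega) (by omega)
          omega
    · rw [hjm]
      rcases (by omega : i = m ∨ i = m - 1 ∨ i ≤ m - 2) with him | rfl | hile
      · rw [him]
        exact ⟨m, m, Or.inr (Or.inr (Or.inr (Or.inr (Or.inr (Or.inr (Or.inr (Or.inr
          ⟨rfl, rfl⟩))))))), le_rfl, le_rfl⟩
      · exact ⟨m - 1, m, Or.inr (Or.inr (Or.inr (Or.inr (Or.inr (Or.inr (Or.inr (Or.inl
          ⟨rfl, rfl⟩))))))), le_rfl, le_rfl⟩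
      · refine ⟨m - 1, m - 1, Or.inr (Or.inr (Or.inr (Or.inr (Or.inr (Or.inr
          (Or.inl ⟨rfl, rfl⟩)))))), ?_, ?_⟩
        · have := haM i (m - 2) (by omega) (by omega) (by omega)
          omega
        · have := hbM 3 i (by omega) (by omega) (by omega)
          omega

include hm has hbs A2 B2 A31 B31 A32 B32 A41 B41 A42 B42 A51 B51 A52 B52 A61 B61 A62 B62 in
lemma covU (i j : ℕ) (hi : 1 ≤ i) (hi' : i ≤ m) (hj : 1 ≤ j) (hj' : j ≤ m) :
    ∃ k l, P9 m k l ∧ a k + a l ≤ a i + a j ∧ b k + b l ≤ b i + b j := by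
  rcases le_total i j with h | h
  · exact covOrd m a b hm has hbs A2 B2 A31 B31 A32 B32 A41 B41 A42 B42 A51 B51 A52 B52
      A61 B61 A62 B62 i j hi h hj'
  · obtain ⟨k, l, hp, h1, h2⟩ := covOrd m a b hm has hbs A2 B2 A31 B31 A32 B32 A41 B41
      A42 B42 A51 B51 A52 B52 A61 B61 A62 B62 j i hj h hi'
    exact ⟨k, l, hp, by omega, by omega⟩

end Arith



noncomputable def ev (a b : ℕ → ℕ) (i : ℕ) : Fin 2 →₀ ℕ :=
  Finsupp.single 0 (a i) + Finsupp.single 1 (b i)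

@[simp] lemma ev_zero (a b : ℕ → ℕ) (i : ℕ) : ev a b i 0 = a i := by
  simp [ev, Finsupp.single_apply]

@[simp] lemma ev_one (a b : ℕ → ℕ) (i : ℕ) : ev a b i 1 = b i := by
  simp [ev, Finsupp.single_apply]

lemma le2 (f g : Fin 2 →₀ ℕ) : f ≤ g ↔ f 0 ≤ g 0 ∧ f 1 ≤ g 1 := by
  rw [Finsupp.le_def, Fin.forall_fin_two]

lemma ev_add_le (a b : ℕ → ℕ) (k l k' l' : ℕ) :
    ev a b k + ev a b l ≤ ev a b k' + ev a b l' ↔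
      (a k + a l ≤ a k' + a l' ∧ b k + b l ≤ b k' + b l') := by
  rw [le2]
  simp [Finsupp.add_apply]

lemma eq2 (f g : Fin 2 →₀ ℕ) (h0 : f 0 = g 0) (h1 : f 1 = g 1) : f = g := by
  ext x
  fin_cases x
  · exact h0
  · exact h1

lemma ev_mul {K : Type*} [Field K] (a b : ℕ → ℕ) (u : ℕ → MvPolynomial (Fin 2) K)
    (hu : ∀ i, u i = X 0 ^ a i * X 1 ^ b i) (k l : ℕ) :
    u k * u l = monomial (ev a b k + ev a b l) (1 : K) := by
  rw [hu k, hu l, X_pow_eq_monomial, X_pow_eq_monomial, X_pow_eq_monomial,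
    X_pow_eq_monomial, monomial_mul, monomial_mul, monomial_mul]
  rw [one_mul, one_mul]
  congr 1

lemma sq_span {K : Type*} [Field K] (m : ℕ) (hm : 5 ≤ m) (a b : ℕ → ℕ)
    (u : ℕ → MvPolynomial (Fin 2) K)
    (hu : ∀ i, u i = X 0 ^ a i * X 1 ^ b i)
    (I : Ideal (MvPolynomial (Fin 2) K))
    (hI : I = Ideal.span (u '' Set.Icc 1 m)) :
    I ^ 2 = Ideal.span ((fun f => monomial f (1 : K)) ''
      (Set.image2 (fun i j => ev a b i + ev a b j) (Set.Icc 1 m) (Set.Icc 1 m))) := by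
  have himg : u '' Set.Icc 1 m =
      (fun f => monomial f (1 : K)) '' (ev a b '' Set.Icc 1 m) := by
    rw [Set.image_image]
    refine Set.image_congr fun i _ => ?_
    rw [hu i, X_pow_eq_monomial, X_pow_eq_monomial, monomial_mul, one_mul]
    rfl
  rw [hI, himg, pow_two, Ideal.span_mul_span']
  congr 1
  rw [← Set.image2_mul, Set.image2_image_left, Set.image2_image_right]
  simp only [monomial_mul, one_mul]
  rw [Set.image2_image_left, Set.image2_image_right, Set.image_image2]


end TS

/-- Theorem 3.1 of [TS]: under the nine divisibility conditions, the square of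
`I = ⟨u₁,…,u_m⟩ ⊆ K[x,y]` has minimal monomial generating set consisting of the nine
monomials `u₁², u₁u₂, u₂², u₁u_{m−1}, u₁u_m, u₂u_m, u_{m−1}², u_{m−1}u_m, u_m²`. -/
theorem tiny_square_nine_conditions (K : Type*) [Field K] (m : ℕ) (hm : 5 ≤ m)
    (a b : ℕ → ℕ)
    (ha : ∀ i, 1 ≤ i → i < m → a (i + 1) < a i)
    (hb : ∀ i, 1 ≤ i → i < m → b i < b (i + 1))
    (u : ℕ → MvPolynomial (Fin 2) K)
    (hu : ∀ i, u i = X 0 ^ a i * X 1 ^ b i)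
    (I : Ideal (MvPolynomial (Fin 2) K))
    (hI : I = Ideal.span (u '' Set.Icc 1 m))
    (h2 : u 1 * u m ∣ u 2 * u (m - 1))
    (h31 : u 1 * u (m - 1) ∣ u 2 * u 3)
    (h32 : u 1 * u (m - 1) ∣ u (m - 2) ^ 2)
    (h41 : u 2 ^ 2 ∣ u 1 * u 3)
    (h42 : u 2 ^ 2 ∣ u 1 * u (m - 2))
    (h51 : u 2 * u m ∣ u 3 * u (m - 1))
    (h52 : u 2 * u m ∣ u (m - 2) * u (m - 1))
    (h61 : u (m - 1) ^ 2 ∣ u 3 * u m)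
    (h62 : u (m - 1) ^ 2 ∣ u (m - 2) * u m) :
    minGen (I ^ 2) =
      {u 1 ^ 2, u 1 * u 2, u 2 ^ 2, u 1 * u (m - 1), u 1 * u m, u 2 * u m,
        u (m - 1) ^ 2, u (m - 1) * u m, u m ^ 2} := by
  have has : ∀ i j, 1 ≤ i → i < j → j ≤ m → a j < a i :=
    fun i j h1 h2 h3 => TS.steps_dec a m ha j i h1 h2 h3
  have hbs : ∀ i j, 1 ≤ i → i < j → j ≤ m → b i < b j :=
    fun i j h1 h2 h3 => TS.steps_inc b m hb j i h1 h2 h3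
  rw [pow_two] at h32 h41 h42 h61 h62
  have hD : ∀ k l k' l', u k * u l ∣ u k' * u l' →
      a k + a l ≤ a k' + a l' ∧ b k + b l ≤ b k' + b l' := by
    intro k l k' l' h
    rw [TS.ev_mul a b u hu, TS.ev_mul a b u hu, monomial_dvd_monomial] at h
    have hle := h.1.resolve_left one_ne_zero
    exact (TS.ev_add_le a b _ _ _ _).mp hle
  obtain ⟨A2, B2⟩ := hD 1 m 2 (m - 1) h2
  obtain ⟨A31, B31⟩ := hD 1 (m - 1) 2 3 h31
  obtain ⟨A32, B32⟩ := hD 1 (m - 1) (m - 2) (m - 2) h32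
  obtain ⟨A41, B41⟩ := hD 2 2 1 3 h41
  obtain ⟨A42, B42⟩ := hD 2 2 1 (m - 2) h42
  obtain ⟨A51, B51⟩ := hD 2 m 3 (m - 1) h51
  obtain ⟨A52, B52⟩ := hD 2 m (m - 2) (m - 1) h52
  obtain ⟨A61, B61⟩ := hD (m - 1) (m - 1) 3 m h61
  obtain ⟨A62, B62⟩ := hD (m - 1) (m - 1) (m - 2) m h62
  have hT : I ^ 2 = Ideal.span ((fun f => monomial f (1 : K)) ''
      (Set.image2 (fun i j => TS.ev a b i + TS.ev a b j) (Set.Icc 1 m) (Set.Icc 1 m))) :=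
    TS.sq_span m hm a b u hu I hI
  have hST : ({TS.ev a b 1 + TS.ev a b 1, TS.ev a b 1 + TS.ev a b 2,
      TS.ev a b 2 + TS.ev a b 2, TS.ev a b 1 + TS.ev a b (m - 1),
      TS.ev a b 1 + TS.ev a b m, TS.ev a b 2 + TS.ev a b m,
      TS.ev a b (m - 1) + TS.ev a b (m - 1), TS.ev a b (m - 1) + TS.ev a b m,
      TS.ev a b m + TS.ev a b m} : Set (Fin 2 →₀ ℕ)) ⊆
      Set.image2 (fun i j => TS.ev a b i + TS.ev a b j) (Set.Icc 1 m) (Set.Icc 1 m) := by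
    have hmem : ∀ k l, 1 ≤ k → k ≤ m → 1 ≤ l → l ≤ m →
        TS.ev a b k + TS.ev a b l ∈
          Set.image2 (fun i j => TS.ev a b i + TS.ev a b j) (Set.Icc 1 m) (Set.Icc 1 m) :=
      fun k l h1 h2 h3 h4 =>
        Set.mem_image2_of_mem (Set.mem_Icc.mpr ⟨h1, h2⟩) (Set.mem_Icc.mpr ⟨h3, h4⟩)
    intro s hs
    simp only [Set.mem_insert_iff, Set.mem_singleton_iff] at hs
    rcases hs with rfl | rfl | rfl | rfl | rfl | rfl | rfl | rfl | rfl <;>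
      exact hmem _ _ (by omega) (by omega) (by omega) (by omega)
  have cov : ∀ t ∈ Set.image2 (fun i j => TS.ev a b i + TS.ev a b j)
      (Set.Icc 1 m) (Set.Icc 1 m),
      ∃ s ∈ ({TS.ev a b 1 + TS.ev a b 1, TS.ev a b 1 + TS.ev a b 2,
        TS.ev a b 2 + TS.ev a b 2, TS.ev a b 1 + TS.ev a b (m - 1),
        TS.ev a b 1 + TS.ev a b m, TS.ev a b 2 + TS.ev a b m,
        TS.ev a b (m - 1) + TS.ev a b (m - 1), TS.ev a b (m - 1) + TS.ev a b m,
        TS.ev a b m + TS.ev a b m} : Set (Fin 2 →₀ ℕ)), s ≤ t := by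
    rintro t ⟨i, hi, j, hj, rfl⟩
    rw [Set.mem_Icc] at hi hj
    obtain ⟨k, l, hp, hA, hB⟩ := TS.covU m a b hm has hbs A2 B2 A31 B31 A32 B32 A41 B41
      A42 B42 A51 B51 A52 B52 A61 B61 A62 B62 i j hi.1 hi.2 hj.1 hj.2
    refine ⟨TS.ev a b k + TS.ev a b l, ?_, (TS.ev_add_le a b _ _ _ _).mpr ⟨hA, hB⟩⟩
    rcases hp with ⟨hk, hl⟩ | ⟨hk, hl⟩ | ⟨hk, hl⟩ | ⟨hk, hl⟩ | ⟨hk, hl⟩ | ⟨hk, hl⟩ |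
      ⟨hk, hl⟩ | ⟨hk, hl⟩ | ⟨hk, hl⟩ <;> rw [hk, hl] <;> simp
  have hmin : ∀ s ∈ ({TS.ev a b 1 + TS.ev a b 1, TS.ev a b 1 + TS.ev a b 2,
      TS.ev a b 2 + TS.ev a b 2, TS.ev a b 1 + TS.ev a b (m - 1),
      TS.ev a b 1 + TS.ev a b m, TS.ev a b 2 + TS.ev a b m,
      TS.ev a b (m - 1) + TS.ev a b (m - 1), TS.ev a b (m - 1) + TS.ev a b m,
      TS.ev a b m + TS.ev a b m} : Set (Fin 2 →₀ ℕ)),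
      ∀ t ∈ Set.image2 (fun i j => TS.ev a b i + TS.ev a b j) (Set.Icc 1 m) (Set.Icc 1 m),
      t ≤ s → t = s := by
    intro s hs t ht hle
    obtain ⟨i, hi, j, hj, rfl⟩ := ht
    rw [Set.mem_Icc] at hi hj
    simp only [Set.mem_insert_iff, Set.mem_singleton_iff] at hs
    obtain ⟨k, l, hp, rfl⟩ : ∃ k l, TS.P9 m k l ∧ s = TS.ev a b k + TS.ev a b l := by
      rcases hs with rfl | rfl | rfl | rfl | rfl | rfl | rfl | rfl | rfl
      exacts [⟨1, 1, Or.inl ⟨rfl, rfl⟩, rfl⟩,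
        ⟨1, 2, Or.inr (Or.inl ⟨rfl, rfl⟩), rfl⟩,
        ⟨2, 2, Or.inr (Or.inr (Or.inl ⟨rfl, rfl⟩)), rfl⟩,
        ⟨1, m - 1, Or.inr (Or.inr (Or.inr (Or.inl ⟨rfl, rfl⟩))), rfl⟩,
        ⟨1, m, Or.inr (Or.inr (Or.inr (Or.inr (Or.inl ⟨rfl, rfl⟩)))), rfl⟩,
        ⟨2, m, Or.inr (Or.inr (Or.inr (Or.inr (Or.inr (Or.inl ⟨rfl, rfl⟩))))), rfl⟩,
        ⟨m - 1, m - 1, Or.inr (Or.inr (Or.inr (Or.inr (Or.inr (Or.inr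
          (Or.inl ⟨rfl, rfl⟩)))))), rfl⟩,
        ⟨m - 1, m, Or.inr (Or.inr (Or.inr (Or.inr (Or.inr (Or.inr (Or.inr
          (Or.inl ⟨rfl, rfl⟩))))))), rfl⟩,
        ⟨m, m, Or.inr (Or.inr (Or.inr (Or.inr (Or.inr (Or.inr (Or.inr (Or.inr
          ⟨rfl, rfl⟩))))))), rfl⟩]
    rw [TS.ev_add_le] at hle
    obtain ⟨eA, eB⟩ := TS.minU m a b hm has hbs A2 B2 A31 B31 A32 B32 A41 B41 A42 B42
      A51 B51 A52 B52 A61 B61 A62 B62 k l hp i j hi.1 hi.2 hj.1 hj.2 hle.1 hle.2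
    refine TS.eq2 _ _ ?_ ?_
    · simpa [Finsupp.add_apply] using eA
    · simpa [Finsupp.add_apply] using eB
  rw [hT, TS.minGen_eq_image _ _ hST cov hmin]
  simp only [pow_two]
  simp only [TS.ev_mul a b u hu]
  simp only [Set.image_insert_eq, Set.image_singleton]
end

section
/- Let V = {(i,j) ∈ ℕ² : 1 ≤ i ≤ j ≤ m} and for (i,j) ∈ V set f(i,j) = uᵢuⱼ. Let v, v₁ = (i₁,j₁), v₂ = (i₂,j₂) ∈ V with i₁ ≤ i₂ and j₁ ≤ j₂, and suppose f(v) divides both f(v₁) and f(v₂). Then f(v) divides f(v′) for every v′ = (i,j) ∈ V with i₁ ≤ i ≤ i₂ and j₁ ≤ j ≤ j₂. -/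
open MvPolynomial

lemma mono_dvd_iff_box (K : Type*) [Field K] (A B C D : ℕ) :
    (X 0 ^ A * X 1 ^ B : MvPolynomial (Fin 2) K) ∣ X 0 ^ C * X 1 ^ D ↔ A ≤ C ∧ B ≤ D := by
  rw [X_pow_eq_monomial, X_pow_eq_monomial, X_pow_eq_monomial, X_pow_eq_monomial,
    monomial_mul, monomial_mul, monomial_dvd_monomial]
  simp [Finsupp.le_iff, Fin.forall_fin_two, Finsupp.single_apply]
  omega

lemma anti_box (a : ℕ → ℕ) (m : ℕ) (ha : ∀ i, 1 ≤ i → i < m → a (i + 1) < a i) :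
    ∀ s t, 1 ≤ s → s ≤ t → t ≤ m → a t ≤ a s := by
  intro s t hs hst htm
  induction t with
  | zero => omega
  | succ n ih =>
    rcases Nat.eq_or_lt_of_le hst with h | h
    · subst h; rfl
    · have h1 : s ≤ n := by omega
      exact le_trans (le_of_lt (ha n (by omega) (by omega))) (ih h1 (by omega))

/-- Lemma 2.3 of [TS]: if `f(v) = u_p u_q` divides both `f(v₁) = u_{i₁} u_{j₁}` and
`f(v₂) = u_{i₂} u_{j₂}` with `v₁ ≤ v₂` componentwise, then `f(v)` divides `f(v′)` for
every `v′ = (i,j) ∈ V` with `v₁ ≤ v′ ≤ v₂`. -/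
theorem divides_box_lemma (K : Type*) [Field K] (m : ℕ)
    (a b : ℕ → ℕ)
    (ha : ∀ i, 1 ≤ i → i < m → a (i + 1) < a i)
    (hb : ∀ i, 1 ≤ i → i < m → b i < b (i + 1))
    (u : ℕ → MvPolynomial (Fin 2) K)
    (hu : ∀ i, u i = X 0 ^ a i * X 1 ^ b i)
    (p q i₁ j₁ i₂ j₂ i j : ℕ)
    (hv : 1 ≤ p ∧ p ≤ q ∧ q ≤ m)
    (hv₁ : 1 ≤ i₁ ∧ i₁ ≤ j₁ ∧ j₁ ≤ m)
    (hv₂ : 1 ≤ i₂ ∧ i₂ ≤ j₂ ∧ j₂ ≤ m)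
    (h₁₂ : i₁ ≤ i₂) (h₁₂' : j₁ ≤ j₂)
    (hv' : 1 ≤ i ∧ i ≤ j ∧ j ≤ m)
    (hi₁ : i₁ ≤ i) (hi₂ : i ≤ i₂) (hj₁ : j₁ ≤ j) (hj₂ : j ≤ j₂)
    (hd₁ : u p * u q ∣ u i₁ * u j₁)
    (hd₂ : u p * u q ∣ u i₂ * u j₂) :
    u p * u q ∣ u i * u j := by
  have key : ∀ s t : ℕ, u s * u t = X 0 ^ (a s + a t) * X 1 ^ (b s + b t) := by
    intro s t
    rw [hu, hu, pow_add, pow_add]; ring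
  rw [key p q, key i₁ j₁] at hd₁
  rw [key p q, key i₂ j₂] at hd₂
  rw [key p q, key i j]
  rw [mono_dvd_iff_box] at hd₁ hd₂ ⊢
  have hmono : ∀ s t, 1 ≤ s → s ≤ t → t ≤ m → b s ≤ b t := by
    intro s t hs hst htm
    induction t with
    | zero => omega
    | succ n ih =>
      rcases Nat.eq_or_lt_of_le hst with h | h
      · subst h; rfl
      · exact le_trans (ih (by omega) (by omega)) (le_of_lt (hb n (by omega) (by omega)))
  constructor
  · calc a p + a q ≤ a i₂ + a j₂ := hd₂.1
      _ ≤ a i + a j := by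
        have h1 : a i₂ ≤ a i := anti_box a m ha i i₂ (by omega) hi₂ (by omega)
        have h2 : a j₂ ≤ a j := anti_box a m ha j j₂ (by omega) hj₂ (by omega)
        omega
  · calc b p + b q ≤ b i₁ + b j₁ := hd₁.2
      _ ≤ b i + b j := by
        have h1 : b i₁ ≤ b i := hmono i₁ i (by omega) hi₁ (by omega)
        have h2 : b j₁ ≤ b j := hmono j₁ j (by omega) hj₁ (by omega)
        omega
end

section
/- Suppose m ≥ 5 and the following five divisibility conditions hold in K[x,y]: (A) u₁u_m | u₂u_{m−1}; (B) u₂² | u₁u₃; (B*) u_{m−1}² | u_{m−2}u_m; (C) u₂² | u₁u_{m−2}; (C*) u_{m−1}² | u₃u_m. Then I² is generated by the nine monomials u₁², u₁u₂, u₂², u₁u_{m−1}, u₁u_m, u₂u_m, u_{m−1}², u_{m−1}u_m, u_m²; in particular |G(I²)| ≤ 9. -/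
open MvPolynomial

/-!
Since `uᵢuⱼ = x^(aᵢ+aⱼ) y^(bᵢ+bⱼ)`, divisibility between such products is the componentwise
order of the exponent sums, and the five conditions become linear inequalities between them.
As `a` decreases and `b` increases, `u_k` with `3 ≤ k ≤ m - 2` has `x`-exponent at least that
of `u_{m-2}` and `y`-exponent at least that of `u_3`, so the products `uᵢuⱼ` fall into fifteen
classes according to whether `i` and `j` are `1`, `2`, middle, `m - 1` or `m`; each class is
divisible by one of the nine generators. Finally, the minimal generators of a monomial ideal lie
in every monomial generating set.
-/

open scoped Pointwise

theorem MvPolynomial.X_zero_pow_mul_X_one_pow_dvd_iff {R : Type*} [CommSemiring R]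
    [Nontrivial R] {p q r s : ℕ} :
    (X 0 ^ p * X 1 ^ q : MvPolynomial (Fin 2) R) ∣ X 0 ^ r * X 1 ^ s ↔ p ≤ r ∧ q ≤ s := by
  simp [X_pow_eq_monomial, monomial_mul, monomial_dvd_monomial, Finsupp.le_def,
    Fin.forall_fin_two]

theorem Ideal.span_sq_eq_span {R : Type*} [CommSemiring R] {S G : Set R} (hGS : G ⊆ S * S)
    (hSG : S * S ⊆ Ideal.span G) : Ideal.span S ^ 2 = Ideal.span G := by
  rw [sq, Ideal.span_mul_span']
  exact le_antisymm (Ideal.span_le.mpr hSG) (Ideal.span_mono hGS)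

theorem Set.ncard_le_nine {α : Type*} (x₁ x₂ x₃ x₄ x₅ x₆ x₇ x₈ x₉ : α) :
    ({x₁, x₂, x₃, x₄, x₅, x₆, x₇, x₈, x₉} : Set α).ncard ≤ 9 := by
  iterate 8 refine (Set.ncard_insert_le _ _).trans (Nat.succ_le_succ ?_)
  exact (Set.ncard_singleton _).le

section Monomials

variable {K σ : Type*} [Field K]

theorem isMonomial_X (i : σ) : IsMonomial (X i : MvPolynomial σ K) := ⟨_, rfl⟩

theorem IsMonomial.mul {p q : MvPolynomial σ K} (hp : IsMonomial p) (hq : IsMonomial q) :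
    IsMonomial (p * q) := by
  obtain ⟨s, rfl⟩ := hp
  obtain ⟨t, rfl⟩ := hq
  exact ⟨s + t, by rw [monomial_mul, one_mul]⟩

theorem IsMonomial.pow {p : MvPolynomial σ K} (hp : IsMonomial p) (n : ℕ) :
    IsMonomial (p ^ n) := by
  obtain ⟨s, rfl⟩ := hp
  exact ⟨n • s, by rw [monomial_pow, one_pow]⟩

theorem minGen_span_subset {G : Set (MvPolynomial σ K)} (hG : ∀ g ∈ G, IsMonomial g) :
    minGen (Ideal.span G) ⊆ G := by
  have hGT : G = (fun s => monomial s (1 : K)) '' {s | monomial s 1 ∈ G} := by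
    ext g
    refine ⟨fun hg => ?_, ?_⟩
    · obtain ⟨s, rfl⟩ := hG g hg
      exact ⟨s, hg, rfl⟩
    · rintro ⟨s, hs, rfl⟩
      exact hs
  rintro _ ⟨⟨s, rfl⟩, hs, hmin⟩
  rw [hGT, mem_ideal_span_monomial_image] at hs
  obtain ⟨t, ht, hts⟩ := hs s (by classical simp [support_monomial])
  have hdvd : monomial t (1 : K) ∣ monomial s 1 :=
    monomial_dvd_monomial.mpr ⟨Or.inr hts, dvd_rfl⟩
  rw [← hmin _ ⟨t, rfl⟩ (Ideal.subset_span ht) hdvd]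
  exact ht

theorem ncard_minGen_span_le {G : Set (MvPolynomial σ K)} (hG : ∀ g ∈ G, IsMonomial g)
    (hfin : G.Finite) : (minGen (Ideal.span G)).ncard ≤ G.ncard :=
  Set.ncard_le_ncard (minGen_span_subset hG) hfin

end Monomials

section FiveConditions

variable {K : Type*} [Field K] {m : ℕ} {a b : ℕ → ℕ} {u : ℕ → MvPolynomial (Fin 2) K}

theorem mul_mem_span_of_five_conditions (hm : 5 ≤ m)
    (ha : AntitoneOn a (Set.Icc 1 m)) (hb : MonotoneOn b (Set.Icc 1 m))
    (hu : ∀ i, u i = X 0 ^ a i * X 1 ^ b i)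
    (hA : u 1 * u m ∣ u 2 * u (m - 1))
    (hB : u 2 ^ 2 ∣ u 1 * u 3)
    (hBs : u (m - 1) ^ 2 ∣ u (m - 2) * u m)
    (hC : u 2 ^ 2 ∣ u 1 * u (m - 2))
    (hCs : u (m - 1) ^ 2 ∣ u 3 * u m) {i j : ℕ} (hi : 1 ≤ i) (hij : i ≤ j) (hj : j ≤ m) :
    u i * u j ∈ Ideal.span
      {u 1 ^ 2, u 1 * u 2, u 2 ^ 2, u 1 * u (m - 1), u 1 * u m, u 2 * u m,
        u (m - 1) ^ 2, u (m - 1) * u m, u m ^ 2} := by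
  have hdvd : ∀ p q r s,
      u p * u q ∣ u r * u s ↔ a p + a q ≤ a r + a s ∧ b p + b q ≤ b r + b s := fun p q r s => by
    simp only [hu, mul_mul_mul_comm, ← pow_add, X_zero_pow_mul_X_one_pow_dvd_iff]
  rw [sq, hdvd] at hB hBs hC hCs
  rw [hdvd] at hA
  suffices ∃ p q, u p * u q ∈ ({u 1 ^ 2, u 1 * u 2, u 2 ^ 2, u 1 * u (m - 1), u 1 * u m,
      u 2 * u m, u (m - 1) ^ 2, u (m - 1) * u m, u m ^ 2} : Set _) ∧
      a p + a q ≤ a i + a j ∧ b p + b q ≤ b i + b j by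
    obtain ⟨p, q, hpq, hle⟩ := this
    exact Ideal.mem_of_dvd _ ((hdvd p q i j).mpr hle) (Ideal.subset_span hpq)
  have hmid : ∀ k, 3 ≤ k → k ≤ m - 2 → a (m - 2) ≤ a k ∧ b 3 ≤ b k := fun k hk₁ hk₂ =>
    ⟨ha ⟨by omega, hk₂.trans (by omega)⟩ ⟨by omega, by omega⟩ hk₂,
      hb ⟨by omega, by omega⟩ ⟨by omega, hk₂.trans (by omega)⟩ hk₁⟩
  obtain rfl | rfl | ⟨hi₁, hi₂⟩ | rfl | him :
      i = 1 ∨ i = 2 ∨ (3 ≤ i ∧ i ≤ m - 2) ∨ i = m - 1 ∨ i = m := by omega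
  · obtain rfl | rfl | ⟨hj₁, hj₂⟩ | rfl | hjm :
        j = 1 ∨ j = 2 ∨ (3 ≤ j ∧ j ≤ m - 2) ∨ j = m - 1 ∨ j = m := by omega
    · exact ⟨1, 1, by simp [sq], le_rfl, le_rfl⟩
    · exact ⟨1, 2, by simp, le_rfl, le_rfl⟩
    · obtain ⟨haj, hbj⟩ := hmid j hj₁ hj₂
      exact ⟨2, 2, by simp [sq], by omega, by omega⟩
    · exact ⟨1, m - 1, by simp, le_rfl, le_rfl⟩
    · subst j
      exact ⟨1, m, by simp, le_rfl, le_rfl⟩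
  · obtain rfl | ⟨hj₁, hj₂⟩ | rfl | hjm :
        j = 2 ∨ (3 ≤ j ∧ j ≤ m - 2) ∨ j = m - 1 ∨ j = m := by omega
    · exact ⟨2, 2, by simp [sq], le_rfl, le_rfl⟩
    · obtain ⟨haj, hbj⟩ := hmid j hj₁ hj₂
      exact ⟨1, m - 1, by simp, by omega, by omega⟩
    · exact ⟨1, m, by simp, hA⟩
    · subst j
      exact ⟨2, m, by simp, le_rfl, le_rfl⟩
  · obtain ⟨hai, hbi⟩ := hmid i hi₁ hi₂
    obtain ⟨hj₁, hj₂⟩ | rfl | hjm : (3 ≤ j ∧ j ≤ m - 2) ∨ j = m - 1 ∨ j = m := by omega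
    · obtain ⟨haj, hbj⟩ := hmid j hj₁ hj₂
      -- x-exponents by (A) + (B*) + (C), y-exponents by (A) + (B) + (C*)
      exact ⟨1, m, by simp, by omega, by omega⟩
    · exact ⟨2, m, by simp, by omega, by omega⟩
    · subst j
      exact ⟨m - 1, m - 1, by simp [sq], by omega, by omega⟩
  · obtain rfl | hjm : j = m - 1 ∨ j = m := by omega
    · exact ⟨m - 1, m - 1, by simp [sq], le_rfl, le_rfl⟩
    · subst j
      exact ⟨m - 1, m, by simp, le_rfl, le_rfl⟩
  · have hjm : j = m := by omega
    subst i j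
    exact ⟨m, m, by simp [sq], le_rfl, le_rfl⟩

theorem span_image_Icc_sq_of_five_conditions (hm : 5 ≤ m)
    (ha : AntitoneOn a (Set.Icc 1 m)) (hb : MonotoneOn b (Set.Icc 1 m))
    (hu : ∀ i, u i = X 0 ^ a i * X 1 ^ b i)
    (hA : u 1 * u m ∣ u 2 * u (m - 1))
    (hB : u 2 ^ 2 ∣ u 1 * u 3)
    (hBs : u (m - 1) ^ 2 ∣ u (m - 2) * u m)
    (hC : u 2 ^ 2 ∣ u 1 * u (m - 2))
    (hCs : u (m - 1) ^ 2 ∣ u 3 * u m) :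
    Ideal.span (u '' Set.Icc 1 m) ^ 2 = Ideal.span
      {u 1 ^ 2, u 1 * u 2, u 2 ^ 2, u 1 * u (m - 1), u 1 * u m, u 2 * u m,
        u (m - 1) ^ 2, u (m - 1) * u m, u m ^ 2} := by
  refine Ideal.span_sq_eq_span ?_ ?_
  · have hprod : ∀ i ∈ Set.Icc 1 m, ∀ j ∈ Set.Icc 1 m,
        u i * u j ∈ u '' Set.Icc 1 m * u '' Set.Icc 1 m :=
      fun i hi j hj => Set.mul_mem_mul (Set.mem_image_of_mem u hi) (Set.mem_image_of_mem u hj)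
    simp only [Set.insert_subset_iff, Set.singleton_subset_iff, sq]
    refine ⟨?_, ?_, ?_, ?_, ?_, ?_, ?_, ?_, ?_⟩ <;>
      exact hprod _ ⟨by omega, by omega⟩ _ ⟨by omega, by omega⟩
  · rw [Set.mul_subset_iff]
    rintro _ ⟨i, hi, rfl⟩ _ ⟨j, hj, rfl⟩
    obtain hij | hji := le_total i j
    · exact mul_mem_span_of_five_conditions hm ha hb hu hA hB hBs hC hCs hi.1 hij hj.2
    · rw [mul_comm (u i)]
      exact mul_mem_span_of_five_conditions hm ha hb hu hA hB hBs hC hCs hj.1 hji hi.2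

end FiveConditions

/-- Improved conditions for tiny squares: under the five divisibility conditions
(A), (B), (B*), (C), (C*), the ideal `I²` is generated by the nine monomials
`u₁², u₁u₂, u₂², u₁u_{m−1}, u₁u_m, u₂u_m, u_{m−1}², u_{m−1}u_m, u_m²`;
in particular `|G(I²)| ≤ 9`. -/
theorem tiny_square_five_conditions (K : Type*) [Field K] (m : ℕ) (hm : 5 ≤ m)
    (a b : ℕ → ℕ)
    (ha : ∀ i, 1 ≤ i → i < m → a (i + 1) < a i)
    (hb : ∀ i, 1 ≤ i → i < m → b i < b (i + 1))
    (u : ℕ → MvPolynomial (Fin 2) K)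
    (hu : ∀ i, u i = X 0 ^ a i * X 1 ^ b i)
    (I : Ideal (MvPolynomial (Fin 2) K))
    (hI : I = Ideal.span (u '' Set.Icc 1 m))
    (hA : u 1 * u m ∣ u 2 * u (m - 1))
    (hB : u 2 ^ 2 ∣ u 1 * u 3)
    (hBs : u (m - 1) ^ 2 ∣ u (m - 2) * u m)
    (hC : u 2 ^ 2 ∣ u 1 * u (m - 2))
    (hCs : u (m - 1) ^ 2 ∣ u 3 * u m) :
    I ^ 2 = Ideal.span
      {u 1 ^ 2, u 1 * u 2, u 2 ^ 2, u 1 * u (m - 1), u 1 * u m, u 2 * u m,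
        u (m - 1) ^ 2, u (m - 1) * u m, u m ^ 2} ∧
    (minGen (I ^ 2)).ncard ≤ 9 := by
  have ha' : AntitoneOn a (Set.Icc 1 m) :=
    antitoneOn_of_add_one_le Set.ordConnected_Icc fun i _ hi hi' => (ha i hi.1 hi'.2).le
  have hb' : MonotoneOn b (Set.Icc 1 m) :=
    monotoneOn_of_le_add_one Set.ordConnected_Icc fun i _ hi hi' => (hb i hi.1 hi'.2).le
  have hsq := hI ▸ span_image_Icc_sq_of_five_conditions hm ha' hb' hu hA hB hBs hC hCs
  have hmon : ∀ i, IsMonomial (u i) := fun i =>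
    hu i ▸ ((isMonomial_X 0).pow _).mul ((isMonomial_X 1).pow _)
  refine ⟨hsq, hsq ▸ (ncard_minGen_span_le ?_ (Set.toFinite _)).trans (Set.ncard_le_nine ..)⟩
  simp only [Set.forall_mem_insert, Set.mem_singleton_iff, forall_eq]
  exact ⟨(hmon 1).pow 2, (hmon 1).mul (hmon 2), (hmon 2).pow 2, (hmon 1).mul (hmon _),
    (hmon 1).mul (hmon m), (hmon 2).mul (hmon m), (hmon _).pow 2, (hmon _).mul (hmon m),
    (hmon m).pow 2⟩
end

section
/- Suppose m ≥ 5 and that u₁u_m | u₂u_{m−1}, u_{m−1}² | u_{m−2}u_m, and u_{m−1}² | u₃u_m. Then u₁u_{m−1} divides u₂uⱼ for every j with 3 ≤ j ≤ m−2. -/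
open MvPolynomial

/-!
Everything reduces to inequalities of exponents. In `x`: adding `hA` to `hBs` gives
`a₁ + a_{m-1} ≤ a₂ + a_{m-2}`, and `a_{m-2} ≤ aⱼ` since `a` decreases. In `y`: adding `hA` to `hCs`
gives `b₁ + b_{m-1} ≤ b₂ + b₃`, and `b₃ ≤ bⱼ` since `b` increases.
-/

theorem X_pow_mul_X_pow_dvd_X_pow_mul_X_pow_iff {R : Type*} [CommSemiring R] [Nontrivial R]
    (a b c d : ℕ) :
    (X 0 ^ a * X 1 ^ b : MvPolynomial (Fin 2) R) ∣ X 0 ^ c * X 1 ^ d ↔ a ≤ c ∧ b ≤ d := by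
  simp only [X_pow_eq_monomial, monomial_mul, one_mul, monomial_dvd_monomial, one_ne_zero,
    false_or, dvd_refl, and_true]
  simp [Finsupp.le_def, Fin.forall_fin_two]

theorem case_two_general (K : Type*) [Field K] (m : ℕ)
    (a b : ℕ → ℕ)
    (ha : ∀ i, 1 ≤ i → i < m → a (i + 1) < a i)
    (hb : ∀ i, 1 ≤ i → i < m → b i < b (i + 1))
    (u : ℕ → MvPolynomial (Fin 2) K)
    (hu : ∀ i, u i = X 0 ^ a i * X 1 ^ b i)
    (hA : u 1 * u m ∣ u 2 * u (m - 1))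
    (hBs : u (m - 1) ^ 2 ∣ u (m - 2) * u m)
    (hCs : u (m - 1) ^ 2 ∣ u 3 * u m) :
    ∀ j, 3 ≤ j → j ≤ m - 2 → u 1 * u (m - 1) ∣ u 2 * u j := by
  intro j hj3 hjm
  have a_anti : StrictAntiOn a (Set.Icc 1 m) :=
    strictAntiOn_of_add_one_lt Set.ordConnected_Icc fun i _ hi hi' => ha i hi.1 hi'.2
  have b_mono : StrictMonoOn b (Set.Icc 1 m) :=
    strictMonoOn_of_lt_add_one Set.ordConnected_Icc fun i _ hi hi' => hb i hi.1 hi'.2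
  have haj : a (m - 2) ≤ a j :=
    a_anti.antitoneOn ⟨by omega, hjm.trans (by omega)⟩ ⟨by omega, by omega⟩ hjm
  have hbj : b 3 ≤ b j := b_mono.monotoneOn ⟨by omega, by omega⟩ ⟨by omega, by omega⟩ hj3
  simp only [hu, mul_mul_mul_comm, ← pow_add, sq, X_pow_mul_X_pow_dvd_X_pow_mul_X_pow_iff]
    at hA hBs hCs ⊢
  omega

/-- Case 2 of the proof of the improved tiny-squares theorem: if `u₁u_m ∣ u₂u_{m−1}`,
`u_{m−1}² ∣ u_{m−2}u_m` and `u_{m−1}² ∣ u₃u_m`, then `u₁u_{m−1} ∣ u₂uⱼ` for all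
`3 ≤ j ≤ m−2`. -/
theorem case_two (K : Type*) [Field K] (m : ℕ) (hm : 5 ≤ m)
    (a b : ℕ → ℕ)
    (ha : ∀ i, 1 ≤ i → i < m → a (i + 1) < a i)
    (hb : ∀ i, 1 ≤ i → i < m → b i < b (i + 1))
    (u : ℕ → MvPolynomial (Fin 2) K)
    (hu : ∀ i, u i = X 0 ^ a i * X 1 ^ b i)
    (hA : u 1 * u m ∣ u 2 * u (m - 1))
    (hBs : u (m - 1) ^ 2 ∣ u (m - 2) * u m)
    (hCs : u (m - 1) ^ 2 ∣ u 3 * u m) :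
    ∀ j, 3 ≤ j → j ≤ m - 2 → u 1 * u (m - 1) ∣ u 2 * u j :=
  case_two_general K m a b ha hb u hu hA hBs hCs
end

section
/- Let l, k, t be positive integers with k ≥ 4t, set m = tl + 4, and let u₁,…,u_m be the monomials uᵢ = x^{aᵢ}y^{bᵢ} in K[x,y] where (a₁,…,a_m) = (kl, (k−t)l, (k−t)l−1, (k−t)l−2, …, (k−2t)l, tl, 0) and bᵢ = a_{m+1−i} for all i. Then the sequence (aᵢ) is strictly decreasing, (bᵢ) is strictly increasing, and the five divisibility conditions hold: u₁u_m | u₂u_{m−1}; u₂² | u₁u₃; u_{m−1}² | u_{m−2}u_m; u₂² | u₁u_{m−2}; u_{m−1}² | u₃u_m. Consequently I² is generated by the nine monomials u₁², u₁u₂, u₂², u₁u_{m−1}, u₁u_m, u₂u_m, u_{m−1}², u_{m−1}u_m, u_m², where I = ⟨u₁,…,u_m⟩. -/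
open MvPolynomial Pointwise

private lemma aux_mono_mul {K : Type*} [Field K] (p q r s : ℕ) :
    (X 0 ^ p * X 1 ^ q : MvPolynomial (Fin 2) K) * (X 0 ^ r * X 1 ^ s)
      = X 0 ^ (p + r) * X 1 ^ (q + s) := by
  rw [pow_add, pow_add]; ring

private lemma aux_dvd {K : Type*} [Field K] {p q r s c d e f : ℕ}
    (hx : p + r ≤ c + e) (hy : q + s ≤ d + f) :
    (X 0 ^ p * X 1 ^ q : MvPolynomial (Fin 2) K) * (X 0 ^ r * X 1 ^ s) ∣
      (X 0 ^ c * X 1 ^ d) * (X 0 ^ e * X 1 ^ f) := by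
  rw [aux_mono_mul, aux_mono_mul]
  exact mul_dvd_mul (pow_dvd_pow _ hx) (pow_dvd_pow _ hy)

private lemma aux_sq_dvd {K : Type*} [Field K] {p q c d e f : ℕ}
    (hx : p + p ≤ c + e) (hy : q + q ≤ d + f) :
    (X 0 ^ p * X 1 ^ q : MvPolynomial (Fin 2) K) ^ 2 ∣
      (X 0 ^ c * X 1 ^ d) * (X 0 ^ e * X 1 ^ f) := by
  rw [pow_two]
  exact aux_dvd hx hy

private lemma aux_adec (L N m : ℕ) (hL : 1 ≤ L) (hN3 : 3 * L ≤ N) (hm : m = L + 4)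
    (a : ℕ → ℕ) (ha1 : a 1 = N + L)
    (hamid : ∀ i, 2 ≤ i → i ≤ m - 2 → a i = N - (i - 2))
    (ham1 : a (m - 1) = L) (ham : a m = 0) :
    ∀ i, 1 ≤ i → i < m → a (i + 1) < a i := by
  intro i h1 h2
  by_cases hA : i = 1
  · subst hA
    have h := hamid 2 le_rfl (by omega)
    rw [show (1:ℕ) + 1 = 2 from rfl, h, ha1]
    omega
  by_cases hB : i = m - 1
  · subst hB
    rw [show m - 1 + 1 = m from by omega, ham, ham1]; omega
  by_cases hC : i = m - 2
  · subst hC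
    have h := hamid (m - 2) (by omega) le_rfl
    rw [show m - 2 + 1 = m - 1 from by omega, ham1]; omega
  · have hai := hamid i (by omega) (by omega)
    have hai1 := hamid (i + 1) (by omega) (by omega)
    omega

set_option maxHeartbeats 1000000 in
/-- The three-parameter family of ideals with tiny squares (Example 4.1): for positive
integers `l, k, t` with `k ≥ 4t` and `m = tl + 4`, the exponent sequences
`(a₁,…,a_m) = (kl, (k−t)l, (k−t)l−1, …, (k−2t)l, tl, 0)` and `bᵢ = a_{m+1−i}` are
strictly decreasing resp. increasing, the five divisibility conditions (A), (B), (B*),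
(C), (C*) hold, and consequently `I²` is generated by the nine monomials. -/
theorem three_parameter_family (K : Type*) [Field K] (l k t : ℕ)
    (hl : 1 ≤ l) (hk : 1 ≤ k) (ht : 1 ≤ t) (hkt : 4 * t ≤ k)
    (m : ℕ) (hm : m = t * l + 4)
    (a b : ℕ → ℕ)
    (ha1 : a 1 = k * l)
    (hamid : ∀ i, 2 ≤ i → i ≤ m - 2 → a i = (k - t) * l - (i - 2))
    (ham1 : a (m - 1) = t * l)
    (ham : a m = 0)
    (hab : ∀ i, 1 ≤ i → i ≤ m → b i = a (m + 1 - i))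
    (u : ℕ → MvPolynomial (Fin 2) K)
    (hu : ∀ i, u i = X 0 ^ a i * X 1 ^ b i)
    (I : Ideal (MvPolynomial (Fin 2) K))
    (hI : I = Ideal.span (u '' Set.Icc 1 m)) :
    (∀ i, 1 ≤ i → i < m → a (i + 1) < a i) ∧
    (∀ i, 1 ≤ i → i < m → b i < b (i + 1)) ∧
    (u 1 * u m ∣ u 2 * u (m - 1)) ∧
    (u 2 ^ 2 ∣ u 1 * u 3) ∧
    (u (m - 1) ^ 2 ∣ u (m - 2) * u m) ∧
    (u 2 ^ 2 ∣ u 1 * u (m - 2)) ∧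
    (u (m - 1) ^ 2 ∣ u 3 * u m) ∧
    I ^ 2 = Ideal.span
      {u 1 ^ 2, u 1 * u 2, u 2 ^ 2, u 1 * u (m - 1), u 1 * u m, u 2 * u m,
        u (m - 1) ^ 2, u (m - 1) * u m, u m ^ 2} := by
  -- Normalize arithmetic: L = t*l, N = (k-t)*l
  obtain ⟨L, hLeq⟩ : ∃ L, t * l = L := ⟨_, rfl⟩
  obtain ⟨N, hNeq⟩ : ∃ N, (k - t) * l = N := ⟨_, rfl⟩
  have hL : 1 ≤ L := by simpa [hLeq] using Nat.mul_le_mul ht hl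
  have hN3 : 3 * L ≤ N := by
    rw [← hLeq, ← hNeq]
    calc 3 * (t * l) = (3 * t) * l := by ring
    _ ≤ (k - t) * l := Nat.mul_le_mul_right l (by omega)
  have hkl' : k * l = N + L := by
    rw [← hNeq, ← hLeq, ← Nat.add_mul]
    congr 1
    omega
  rw [hLeq] at hm ham1
  rw [hNeq] at hamid
  rw [hkl'] at ha1
  clear hLeq hNeq hkl' hl hk ht hkt
  have hm5 : 5 ≤ m := by omega
  -- strict decrease of a
  have adec := aux_adec L N m hL hN3 hm a ha1 hamid ham1 ham
  -- strict increase of b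
  have binc : ∀ i, 1 ≤ i → i < m → b i < b (i + 1) := by
    intro i h1 h2
    have e1 : b i = a (m + 1 - i) := hab i h1 (le_of_lt h2)
    have e2 : b (i + 1) = a (m - i) := by
      rw [hab (i + 1) (by omega) (by omega)]
      congr 1
      omega
    rw [e1, e2, show m + 1 - i = (m - i) + 1 from by omega]
    exact adec (m - i) (by omega) (by omega)
  -- key exponent values
  have ha2 : a 2 = N := by have h := hamid 2 le_rfl (by omega); omega
  have ha3 : a 3 = N - 1 := hamid 3 (by omega) (by omega)
  have ham2 : a (m - 2) = N - L := by
    have h := hamid (m - 2) (by omega) le_rfl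
    rw [h]; congr 1; omega
  have hb1 : b 1 = 0 := by
    have h := hab 1 le_rfl (by omega)
    rw [show m + 1 - 1 = m from by omega, ham] at h; exact h
  have hb2 : b 2 = L := by
    have h := hab 2 (by omega) (by omega)
    rw [show m + 1 - 2 = m - 1 from by omega, ham1] at h; exact h
  have hb3 : b 3 = N - L := by
    have h := hab 3 (by omega) (by omega)
    rw [show m + 1 - 3 = m - 2 from by omega, ham2] at h; exact h
  have hbm2 : b (m - 2) = N - 1 := by
    have h := hab (m - 2) (by omega) (by omega)
    rw [show m + 1 - (m - 2) = 3 from by omega, ha3] at h; exact h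
  have hbm1 : b (m - 1) = N := by
    have h := hab (m - 1) (by omega) (by omega)
    rw [show m + 1 - (m - 1) = 2 from by omega, ha2] at h; exact h
  have hbm : b m = N + L := by
    have h := hab m (by omega) le_rfl
    rw [show m + 1 - m = 1 from by omega, ha1] at h; exact h
  have hbmid : ∀ i, 3 ≤ i → i ≤ m - 1 → b i = N - (m - 1 - i) := by
    intro i h3 hm1
    have h := hab i (by omega) (by omega)
    have e : m + 1 - i = (m - 1 - i) + 2 := by omega
    have h2 := hamid (m + 1 - i) (by omega) (by omega)
    rw [e, Nat.add_sub_cancel] at h2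
    rw [h, e, h2]
  -- monomial forms of the u's
  have hU1 : u 1 = X 0 ^ (N + L) * X 1 ^ 0 := by rw [hu 1, ha1, hb1]
  have hU2 : u 2 = X 0 ^ N * X 1 ^ L := by rw [hu 2, ha2, hb2]
  have hU3 : u 3 = X 0 ^ (N - 1) * X 1 ^ (N - L) := by rw [hu 3, ha3, hb3]
  have hUm2 : u (m - 2) = X 0 ^ (N - L) * X 1 ^ (N - 1) := by
    rw [hu (m - 2), ham2, hbm2]
  have hUm1 : u (m - 1) = X 0 ^ L * X 1 ^ N := by rw [hu (m - 1), ham1, hbm1]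
  have hUm : u m = X 0 ^ 0 * X 1 ^ (N + L) := by rw [hu m, ham, hbm]
  have hUmid : ∀ i, 3 ≤ i → i ≤ m - 2 →
      u i = X 0 ^ (N - (i - 2)) * X 1 ^ (N - (m - 1 - i)) := by
    intro i h1 h2
    rw [hu i, hamid i (by omega) h2, hbmid i h1 (by omega)]
  -- get rid of all subtraction-laden numeric hypotheses to keep omega fast
  clear ha1 ha2 ha3 ham2 ham1 ham hb1 hb2 hb3 hbm2 hbm1 hbm hamid hab hu
  refine ⟨adec, binc, ?_, ?_, ?_, ?_, ?_, ?_⟩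
  · -- (A)
    rw [hU1, hUm, hU2, hUm1]; exact aux_dvd (by omega) (by omega)
  · -- (B)
    rw [hU2, hU1, hU3]; exact aux_sq_dvd (by omega) (by omega)
  · -- (B*)
    rw [hUm1, hUm2, hUm]; exact aux_sq_dvd (by omega) (by omega)
  · -- (C)
    rw [hU2, hU1, hUm2]; exact aux_sq_dvd (by omega) (by omega)
  · -- (C*)
    rw [hUm1, hU3, hUm]; exact aux_sq_dvd (by omega) (by omega)
  · -- the ideal equality
    set T : Set (MvPolynomial (Fin 2) K) :=
      {u 1 ^ 2, u 1 * u 2, u 2 ^ 2, u 1 * u (m - 1), u 1 * u m, u 2 * u m,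
        u (m - 1) ^ 2, u (m - 1) * u m, u m ^ 2} with hT
    have hg1 : u 1 ^ 2 ∈ T := by rw [hT]; exact Set.mem_insert _ _
    have hg2 : u 1 * u 2 ∈ T := by
      rw [hT]; exact Set.mem_insert_of_mem _ (Set.mem_insert _ _)
    have hg3 : u 2 ^ 2 ∈ T := by
      rw [hT]
      exact Set.mem_insert_of_mem _ (Set.mem_insert_of_mem _ (Set.mem_insert _ _))
    have hg4 : u 1 * u (m - 1) ∈ T := by
      rw [hT]
      exact Set.mem_insert_of_mem _ (Set.mem_insert_of_mem _
        (Set.mem_insert_of_mem _ (Set.mem_insert _ _)))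
    have hg5 : u 1 * u m ∈ T := by
      rw [hT]
      exact Set.mem_insert_of_mem _ (Set.mem_insert_of_mem _
        (Set.mem_insert_of_mem _ (Set.mem_insert_of_mem _ (Set.mem_insert _ _))))
    have hg6 : u 2 * u m ∈ T := by
      rw [hT]
      exact Set.mem_insert_of_mem _ (Set.mem_insert_of_mem _
        (Set.mem_insert_of_mem _ (Set.mem_insert_of_mem _
          (Set.mem_insert_of_mem _ (Set.mem_insert _ _)))))
    have hg7 : u (m - 1) ^ 2 ∈ T := by
      rw [hT]
      exact Set.mem_insert_of_mem _ (Set.mem_insert_of_mem _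
        (Set.mem_insert_of_mem _ (Set.mem_insert_of_mem _
          (Set.mem_insert_of_mem _ (Set.mem_insert_of_mem _ (Set.mem_insert _ _))))))
    have hg8 : u (m - 1) * u m ∈ T := by
      rw [hT]
      exact Set.mem_insert_of_mem _ (Set.mem_insert_of_mem _
        (Set.mem_insert_of_mem _ (Set.mem_insert_of_mem _
          (Set.mem_insert_of_mem _ (Set.mem_insert_of_mem _
            (Set.mem_insert_of_mem _ (Set.mem_insert _ _)))))))
    have hg9 : u m ^ 2 ∈ T := by
      rw [hT]
      exact Set.mem_insert_of_mem _ (Set.mem_insert_of_mem _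
        (Set.mem_insert_of_mem _ (Set.mem_insert_of_mem _
          (Set.mem_insert_of_mem _ (Set.mem_insert_of_mem _
            (Set.mem_insert_of_mem _ (Set.mem_insert_of_mem _ rfl)))))))
    have inT : ∀ g, g ∈ T → ∀ v : MvPolynomial (Fin 2) K, g ∣ v → v ∈ Ideal.span T := by
      intro g hg v hdvd
      obtain ⟨c, rfl⟩ := hdvd
      exact Ideal.mul_mem_right _ _ (Ideal.subset_span hg)
    have key : ∀ i j, 1 ≤ i → i ≤ j → j ≤ m → u i * u j ∈ Ideal.span T := by
      intro i j hi hij hjm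
      by_cases hi1 : i = 1
      · subst hi1
        by_cases hj1 : j = 1
        · subst hj1
          exact inT _ hg1 _ (by rw [hU1]; exact aux_sq_dvd le_rfl le_rfl)
        by_cases hj2 : j = 2
        · subst hj2; exact inT _ hg2 _ dvd_rfl
        by_cases hjm1 : j = m - 1
        · subst hjm1; exact inT _ hg4 _ dvd_rfl
        by_cases hjm' : j = m
        · subst hjm'; exact inT _ hg5 _ dvd_rfl
        · exact inT _ hg3 _ (by
            rw [hU2, hU1, hUmid j (by omega) (by omega)]
            exact aux_sq_dvd (by omega) (by omega))
      by_cases hi2 : i = 2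
      · subst hi2
        by_cases hj2 : j = 2
        · subst hj2
          exact inT _ hg3 _ (by rw [hU2]; exact aux_sq_dvd le_rfl le_rfl)
        by_cases hjm1 : j = m - 1
        · subst hjm1
          exact inT _ hg5 _ (by
            rw [hU1, hUm, hU2, hUm1]
            exact aux_dvd (by omega) (by omega))
        by_cases hjm' : j = m
        · subst hjm'; exact inT _ hg6 _ dvd_rfl
        · exact inT _ hg4 _ (by
            rw [hU1, hUm1, hU2, hUmid j (by omega) (by omega)]
            exact aux_dvd (by omega) (by omega))
      by_cases him : i = m
      · have hj' : j = m := by omega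
        rw [him, hj']
        exact inT _ hg9 _ (by rw [hUm]; exact aux_sq_dvd le_rfl le_rfl)
      by_cases him1 : i = m - 1
      · subst him1
        by_cases hjm' : j = m
        · subst hjm'; exact inT _ hg8 _ dvd_rfl
        · have hj' : j = m - 1 := by omega
          subst hj'
          exact inT _ hg7 _ (by rw [hUm1]; exact aux_sq_dvd le_rfl le_rfl)
      · -- 3 ≤ i ≤ m - 2
        by_cases hjm' : j = m
        · subst hjm'
          exact inT _ hg7 _ (by
            rw [hUm1, hUmid i (by omega) (by omega), hUm]
            exact aux_sq_dvd (by omega) (by omega))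
        by_cases hjm1 : j = m - 1
        · subst hjm1
          exact inT _ hg6 _ (by
            rw [hU2, hUm, hUmid i (by omega) (by omega), hUm1]
            exact aux_dvd (by omega) (by omega))
        · exact inT _ hg5 _ (by
            rw [hU1, hUm, hUmid i (by omega) (by omega),
              hUmid j (by omega) (by omega)]
            exact aux_dvd (by omega) (by omega))
    rw [hI, pow_two, Ideal.span_mul_span']
    apply le_antisymm
    · rw [Ideal.span_le]
      rintro z hz
      rw [Set.mem_mul] at hz
      obtain ⟨x, hx, y, hy, rfl⟩ := hz
      obtain ⟨i, hi, rfl⟩ := hx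
      obtain ⟨j, hj, rfl⟩ := hy
      simp only [Set.mem_Icc] at hi hj
      rcases le_total i j with h | h
      · exact key i j hi.1 h hj.2
      · rw [mul_comm]; exact key j i hj.1 h hi.2
    · rw [Ideal.span_le]
      have memu : ∀ i, 1 ≤ i → i ≤ m → u i ∈ u '' Set.Icc 1 m :=
        fun i h1 h2 => ⟨i, Set.mem_Icc.mpr ⟨h1, h2⟩, rfl⟩
      have pair : ∀ i j, 1 ≤ i → i ≤ m → 1 ≤ j → j ≤ m →
          u i * u j ∈ Ideal.span ((u '' Set.Icc 1 m) * (u '' Set.Icc 1 m)) :=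
        fun i j h1 h2 h3 h4 =>
          Ideal.subset_span (Set.mul_mem_mul (memu i h1 h2) (memu j h3 h4))
      intro z hz
      simp only [hT, Set.mem_insert_iff, Set.mem_singleton_iff] at hz
      rcases hz with h|h|h|h|h|h|h|h|h <;> subst h <;>
        simp only [SetLike.mem_coe, pow_two]
      · exact pair 1 1 (by omega) (by omega) (by omega) (by omega)
      · exact pair 1 2 (by omega) (by omega) (by omega) (by omega)
      · exact pair 2 2 (by omega) (by omega) (by omega) (by omega)
      · exact pair 1 (m - 1) (by omega) (by omega) (by omega) (by omega)
      · exact pair 1 m (by omega) (by omega) (by omega) (by omega)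
      · exact pair 2 m (by omega) (by omega) (by omega) (by omega)
      · exact pair (m - 1) (m - 1) (by omega) (by omega) (by omega) (by omega)
      · exact pair (m - 1) m (by omega) (by omega) (by omega) (by omega)
      · exact pair m m (by omega) (by omega) (by omega) (by omega)
end
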